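/- arXiv:1604.02293 — 3 statements merged into one kernel-verified Lean document; each statement's English description precedes it below -/
import Mathlib

section
/- Let Φ : (a,b) → ℝ be a smooth function on a nonempty open interval such that |Φ''(x)| ≥ ρ for all x ∈ (a,b), where ρ > 0. Then |∫_a^b e^{iΦ(x)} dx| ≤ M ρ^{-1/2} for a universal constant M > 0 (independent of a, b, Φ, ρ). One may take M = 8. -/
open MeasureTheory Set intervalIntegral Complex Filter


private lemma vdc_norm_exp (t : ℝ) : ‖Complex.exp (Complex.I * (t : ℂ))‖ = 1 := by
  rw [Complex.norm_exp]; simp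

private lemma vdc_side (Φ : ℝ → ℝ) (U : Set ℝ) (hUo : IsOpen U) (hΦ : ContDiffOn ℝ 2 Φ U)
    (c d lam : ℝ) (hcd : c ≤ d) (hsub : Icc c d ⊆ U) (hlam : 0 < lam)
    (hψ0 : ∀ x ∈ Icc c d, 0 ≤ deriv (deriv Φ) x)
    (hsign : (∀ x ∈ Icc c d, lam ≤ deriv Φ x) ∨ (∀ x ∈ Icc c d, deriv Φ x ≤ -lam)) :
    ‖∫ x in c..d, Complex.exp (Complex.I * (Φ x : ℂ))‖ ≤ 3 / lam := by
  set φ := deriv Φ with hφdef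
  set ψ := deriv (deriv Φ) with hψdef
  have hΦdiff : DifferentiableOn ℝ Φ U := hΦ.differentiableOn (by norm_num)
  have hφc1 : ContDiffOn ℝ 1 φ U := hΦ.deriv_of_isOpen hUo (by norm_num)
  have hφdiff : DifferentiableOn ℝ φ U := hφc1.differentiableOn (by norm_num)
  have hψcont : ContinuousOn ψ U := hφc1.continuousOn_deriv_of_isOpen hUo le_rfl
  have hdΦ : ∀ x ∈ Icc c d, HasDerivAt Φ (φ x) x := fun x hx =>
    (hΦdiff.differentiableAt (hUo.mem_nhds (hsub hx))).hasDerivAt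
  have hdφ : ∀ x ∈ Icc c d, HasDerivAt φ (ψ x) x := fun x hx =>
    (hφdiff.differentiableAt (hUo.mem_nhds (hsub hx))).hasDerivAt
  have hφabs : ∀ x ∈ Icc c d, lam ≤ |φ x| := by
    rcases hsign with h | h
    · exact fun x hx => (h x hx).trans (le_abs_self _)
    · exact fun x hx => le_trans (by linarith [h x hx]) (neg_le_abs _)
  have hφ0 : ∀ x ∈ Icc c d, φ x ≠ 0 := fun x hx h0 => by
    have := hφabs x hx; rw [h0, abs_zero] at this; linarith
  set F : ℝ → ℂ := fun x => Complex.exp (Complex.I * (Φ x : ℂ)) with hFdef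
  set G : ℝ → ℂ := fun x => -Complex.I * (((φ x)⁻¹ : ℝ) : ℂ) with hGdef
  set G' : ℝ → ℂ := fun x => -Complex.I * ((-ψ x / φ x ^ 2 : ℝ) : ℂ) with hG'def
  have huIcc : uIcc c d = Icc c d := uIcc_of_le hcd
  have hdF : ∀ x ∈ uIcc c d, HasDerivAt F (Complex.I * (φ x : ℂ) * F x) x := by
    rw [huIcc]; intro x hx
    simpa [hFdef, mul_comm] using (((hdΦ x hx).ofReal_comp).const_mul Complex.I).cexp
  have hdG : ∀ x ∈ uIcc c d, HasDerivAt G (G' x) x := by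
    rw [huIcc]; intro x hx
    exact (((hdφ x hx).inv (hφ0 x hx)).ofReal_comp).const_mul (-Complex.I)
  have hcontΦ : ContinuousOn Φ (Icc c d) := (hΦ.continuousOn).mono hsub
  have hcontφ : ContinuousOn φ (Icc c d) := (hφc1.continuousOn).mono hsub
  have hcontψ : ContinuousOn ψ (Icc c d) := hψcont.mono hsub
  have hcontF : ContinuousOn F (Icc c d) :=
    Complex.continuous_exp.comp_continuousOn
      (continuousOn_const.mul (Complex.continuous_ofReal.comp_continuousOn hcontΦ))
  have hcontIφ : ContinuousOn (fun x => Complex.I * (φ x : ℂ)) (Icc c d) :=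
    continuousOn_const.mul (Complex.continuous_ofReal.comp_continuousOn hcontφ)
  have hcontG' : ContinuousOn G' (Icc c d) := by
    apply continuousOn_const.mul
    apply Complex.continuous_ofReal.comp_continuousOn
    exact (hcontψ.neg).div (hcontφ.pow 2) (fun x hx => pow_ne_zero 2 (hφ0 x hx))
  have hintG' : IntervalIntegrable G' volume c d := (hcontG'.mono (by rw [huIcc])).intervalIntegrable
  have hintFv : IntervalIntegrable (fun x => Complex.I * (φ x : ℂ) * F x) volume c d :=
    ((hcontIφ.mul hcontF).mono (by rw [huIcc])).intervalIntegrable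
  have ibp := intervalIntegral.integral_mul_deriv_eq_deriv_mul hdG hdF hintG' hintFv
  have hGmul : ∀ x ∈ uIcc c d, G x * (Complex.I * (φ x : ℂ) * F x) = F x := by
    rw [huIcc]; intro x hx
    have h1 : ((φ x : ℝ) : ℂ) ≠ 0 := Complex.ofReal_ne_zero.2 (hφ0 x hx)
    rw [hGdef]
    push_cast
    field_simp
    linear_combination (-F x) * Complex.I_sq
  rw [intervalIntegral.integral_congr hGmul] at ibp
  have hkey : ∫ x in c..d, ψ x / (φ x) ^ 2 = (φ c)⁻¹ - (φ d)⁻¹ := by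
    have hH : ∀ x ∈ uIcc c d, HasDerivAt (fun y => -(φ y)⁻¹) (ψ x / (φ x) ^ 2) x := by
      rw [huIcc]; intro x hx
      exact ((hdφ x hx).inv (hφ0 x hx)).neg.congr_deriv (by ring)
    have hint : IntervalIntegrable (fun x => ψ x / (φ x) ^ 2) volume c d := by
      apply ContinuousOn.intervalIntegrable
      rw [huIcc]
      exact hcontψ.div (hcontφ.pow 2) (fun x hx => pow_ne_zero 2 (hφ0 x hx))
    rw [intervalIntegral.integral_eq_sub_of_hasDerivAt hH hint]
    ring
  have hnormG : ∀ x ∈ Icc c d, ‖G x‖ ≤ 1 / lam := by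
    intro x hx
    rw [hGdef]
    simp only [norm_mul, norm_neg, Complex.norm_I, one_mul, Complex.norm_real,
      Real.norm_eq_abs, abs_inv]
    rw [one_div]
    exact inv_anti₀ hlam (hφabs x hx)
  have hcend : c ∈ Icc c d := ⟨le_rfl, hcd⟩
  have hdend : d ∈ Icc c d := ⟨hcd, le_rfl⟩
  have hnormint : ‖∫ x in c..d, G' x * F x‖ ≤ 1 / lam := by
    calc ‖∫ x in c..d, G' x * F x‖ ≤ ∫ x in c..d, ‖G' x * F x‖ :=
          intervalIntegral.norm_integral_le_integral_norm hcd
      _ = ∫ x in c..d, ψ x / φ x ^ 2 := by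
          apply intervalIntegral.integral_congr
          rw [huIcc]; intro x hx
          show ‖G' x * F x‖ = ψ x / φ x ^ 2
          rw [norm_mul, hG'def]
          simp only [norm_mul, norm_neg, Complex.norm_I, one_mul, Complex.norm_real,
            Real.norm_eq_abs]
          rw [hFdef, vdc_norm_exp, mul_one, abs_div, abs_neg,
            _root_.abs_of_nonneg (hψ0 x hx), _root_.abs_of_nonneg (sq_nonneg _)]
      _ = (φ c)⁻¹ - (φ d)⁻¹ := hkey
      _ ≤ 1 / lam := by
          rcases hsign with h | h
          · have h1 : (φ c)⁻¹ ≤ 1 / lam := by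
              rw [one_div]; exact inv_anti₀ hlam (h c hcend)
            have h2 : 0 < (φ d)⁻¹ := inv_pos.2 (lt_of_lt_of_le hlam (h d hdend))
            linarith
          · have h1 : (φ c)⁻¹ < 0 := inv_neg''.2 (by linarith [h c hcend])
            have h2 : -(φ d)⁻¹ ≤ 1 / lam := by
              rw [← inv_neg, one_div]
              exact inv_anti₀ hlam (by linarith [h d hdend])
            linarith
  calc ‖∫ x in c..d, F x‖
      = ‖G d * F d - G c * F c - ∫ x in c..d, G' x * F x‖ := by rw [ibp]
    _ ≤ ‖G d * F d - G c * F c‖ + ‖∫ x in c..d, G' x * F x‖ := norm_sub_le _ _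
    _ ≤ ‖G d * F d‖ + ‖G c * F c‖ + ‖∫ x in c..d, G' x * F x‖ := by
        have := norm_sub_le (G d * F d) (G c * F c); linarith
    _ ≤ 1 / lam + 1 / lam + 1 / lam := by
        have e1 : ‖G d * F d‖ ≤ 1 / lam := by
          rw [norm_mul, hFdef, vdc_norm_exp, mul_one]; exact hnormG d hdend
        have e2 : ‖G c * F c‖ ≤ 1 / lam := by
          rw [norm_mul, hFdef, vdc_norm_exp, mul_one]; exact hnormG c hcend
        linarith [hnormint]
    _ = 3 / lam := by ring

private lemma vdc_gap (Φ : ℝ → ℝ) (U : Set ℝ) (hUo : IsOpen U) (hΦ : ContDiffOn ℝ 2 Φ U)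
    (c d ρ : ℝ) (hsub : Icc c d ⊆ U)
    (hψ : ∀ x ∈ Icc c d, ρ ≤ deriv (deriv Φ) x) :
    ∀ x ∈ Icc c d, ∀ y ∈ Icc c d, x ≤ y →
      ρ * (y - x) ≤ deriv Φ y - deriv Φ x := by
  set φ := deriv Φ
  set ψ := deriv (deriv Φ)
  have hφc1 : ContDiffOn ℝ 1 φ U := hΦ.deriv_of_isOpen hUo (by norm_num)
  have hφdiff : DifferentiableOn ℝ φ U := hφc1.differentiableOn (by norm_num)
  have hdφ : ∀ x ∈ Icc c d, HasDerivAt φ (ψ x) x := fun x hx =>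
    (hφdiff.differentiableAt (hUo.mem_nhds (hsub hx))).hasDerivAt
  have hg : ∀ x ∈ Icc c d, HasDerivAt (fun t => φ t - ρ * t) (ψ x - ρ * 1) x :=
    fun x hx => (hdφ x hx).sub ((hasDerivAt_id x).const_mul ρ)
  have hmono : MonotoneOn (fun t => φ t - ρ * t) (Icc c d) := by
    apply monotoneOn_of_deriv_nonneg (convex_Icc c d)
    · exact ((hφc1.continuousOn.mono hsub).sub ((continuous_const.mul continuous_id).continuousOn))
    · intro x hx
      rw [interior_Icc] at hx
      exact ((hg x (Ioo_subset_Icc_self hx)).differentiableAt).differentiableWithinAt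
    · intro x hx
      rw [interior_Icc] at hx
      rw [(hg x (Ioo_subset_Icc_self hx)).deriv]
      have := hψ x (Ioo_subset_Icc_self hx)
      linarith
  intro x hx y hy hxy
  have := hmono hx hy hxy
  simp only at this
  linarith

private lemma vdc_core (Φ : ℝ → ℝ) (U : Set ℝ) (hUo : IsOpen U) (hΦ : ContDiffOn ℝ 2 Φ U)
    (c d ρ : ℝ) (hcd : c ≤ d) (hsub : Icc c d ⊆ U) (hρ : 0 < ρ)
    (hψ : ∀ x ∈ Icc c d, ρ ≤ deriv (deriv Φ) x) :
    ‖∫ x in c..d, Complex.exp (Complex.I * (Φ x : ℂ))‖ ≤ 8 / Real.sqrt ρ := by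
  set φ := deriv Φ with hφdef
  set s := Real.sqrt ρ with hsdef
  have hs0 : 0 < s := Real.sqrt_pos.2 hρ
  have hss : s * s = ρ := Real.mul_self_sqrt hρ.le
  have gap := vdc_gap Φ U hUo hΦ c d ρ hsub hψ
  have hmono : MonotoneOn φ (Icc c d) := fun x hx y hy hxy => by nlinarith [gap x hx y hy hxy]
  have hψ0 : ∀ x ∈ Icc c d, 0 ≤ deriv (deriv Φ) x := fun x hx => le_trans hρ.le (hψ x hx)
  have hφc1 : ContDiffOn ℝ 1 φ U := hΦ.deriv_of_isOpen hUo (by norm_num)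
  have hcontφ : ContinuousOn φ (Icc c d) := hφc1.continuousOn.mono hsub
  have hcend : c ∈ Icc c d := ⟨le_rfl, hcd⟩
  have hdend : d ∈ Icc c d := ⟨hcd, le_rfl⟩
  obtain ⟨u, v, hu, hv, huv, hlen, hP1, hP2⟩ :
      ∃ u v, u ∈ Icc c d ∧ v ∈ Icc c d ∧ u ≤ v ∧ v - u ≤ 2 / s ∧
        (u = c ∨ ∀ x ∈ Icc c u, φ x ≤ -s) ∧ (v = d ∨ ∀ x ∈ Icc v d, s ≤ φ x) := by
    by_cases h1 : s ≤ φ c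
    · exact ⟨c, c, hcend, hcend, le_rfl, by rw [sub_self]; positivity, Or.inl rfl,
        Or.inr fun x hx => le_trans h1 (hmono hcend hx hx.1)⟩
    by_cases h2 : φ d ≤ -s
    · exact ⟨d, d, hdend, hdend, le_rfl, by rw [sub_self]; positivity,
        Or.inr (fun x hx => le_trans (hmono hx hdend hx.2) h2), Or.inl rfl⟩
    push_neg at h1 h2
    have hIVT := intermediate_value_Icc hcd hcontφ
    obtain ⟨u, hu, hφu, hP1⟩ : ∃ u, u ∈ Icc c d ∧ -s ≤ φ u ∧
        (u = c ∨ (φ u = -s ∧ ∀ x ∈ Icc c u, φ x ≤ -s)) := by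
      by_cases hc' : -s ≤ φ c
      · exact ⟨c, hcend, hc', Or.inl rfl⟩
      · push_neg at hc'
        obtain ⟨u, hu, hφu⟩ := hIVT ⟨hc'.le, h2.le⟩
        exact ⟨u, hu, hφu.ge, Or.inr ⟨hφu, fun x hx =>
          hφu ▸ hmono ⟨hx.1, hx.2.trans hu.2⟩ hu hx.2⟩⟩
    obtain ⟨v, hv, hφv, hP2⟩ : ∃ v, v ∈ Icc c d ∧ φ v ≤ s ∧
        (v = d ∨ (φ v = s ∧ ∀ x ∈ Icc v d, s ≤ φ x)) := by
      by_cases hd' : φ d ≤ s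
      · exact ⟨d, hdend, hd', Or.inl rfl⟩
      · push_neg at hd'
        obtain ⟨v, hv, hφv⟩ := hIVT ⟨h1.le, hd'.le⟩
        exact ⟨v, hv, hφv.le, Or.inr ⟨hφv, fun x hx =>
          hφv ▸ hmono hv ⟨hv.1.trans hx.1, hx.2⟩ hx.1⟩⟩
    have huv : u ≤ v := by
      rcases hP1 with rfl | ⟨he1, _⟩
      · exact hv.1
      rcases hP2 with rfl | ⟨he2, _⟩
      · exact hu.2
      by_contra hcon
      push_neg at hcon
      have := hmono hv hu hcon.le
      rw [he1, he2] at this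
      linarith
    refine ⟨u, v, hu, hv, huv, ?_, ?_, ?_⟩
    · rw [le_div_iff₀ hs0]
      nlinarith [gap u hu v hv huv, hφu, hφv, hss, hs0]
    · rcases hP1 with h | h
      exacts [Or.inl h, Or.inr h.2]
    · rcases hP2 with h | h
      exacts [Or.inl h, Or.inr h.2]
  -- split the integral at u and v
  set F : ℝ → ℂ := fun x => Complex.exp (Complex.I * (Φ x : ℂ)) with hFdef
  have hcontF : ContinuousOn F (Icc c d) :=
    Complex.continuous_exp.comp_continuousOn
      (continuousOn_const.mul (Complex.continuous_ofReal.comp_continuousOn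
        (hΦ.continuousOn.mono hsub)))
  have hi1 : IntervalIntegrable F volume c u := by
    apply ContinuousOn.intervalIntegrable
    apply hcontF.mono
    rw [uIcc_of_le hu.1]
    exact Icc_subset_Icc le_rfl hu.2
  have hi2 : IntervalIntegrable F volume u v := by
    apply ContinuousOn.intervalIntegrable
    apply hcontF.mono
    rw [uIcc_of_le huv]
    exact Icc_subset_Icc hu.1 hv.2
  have hi3 : IntervalIntegrable F volume v d := by
    apply ContinuousOn.intervalIntegrable
    apply hcontF.mono
    rw [uIcc_of_le hv.2]
    exact Icc_subset_Icc hv.1 le_rfl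
  have hsplit : ∫ x in c..d, F x = (∫ x in c..u, F x) + (∫ x in u..v, F x) + ∫ x in v..d, F x := by
    rw [integral_add_adjacent_intervals hi1 hi2, integral_add_adjacent_intervals (hi1.trans hi2) hi3]
  have b1 : ‖∫ x in c..u, F x‖ ≤ 3 / s := by
    rcases hP1 with rfl | h
    · rw [integral_same, norm_zero]; positivity
    · exact vdc_side Φ U hUo hΦ c u s hu.1 ((Icc_subset_Icc le_rfl hu.2).trans hsub) hs0
        (fun x hx => hψ0 x ⟨hx.1, hx.2.trans hu.2⟩) (Or.inr h)
  have b3 : ‖∫ x in v..d, F x‖ ≤ 3 / s := by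
    rcases hP2 with rfl | h
    · rw [integral_same, norm_zero]; positivity
    · exact vdc_side Φ U hUo hΦ v d s hv.2 ((Icc_subset_Icc hv.1 le_rfl).trans hsub) hs0
        (fun x hx => hψ0 x ⟨hv.1.trans hx.1, hx.2⟩) (Or.inl h)
  have b2 : ‖∫ x in u..v, F x‖ ≤ v - u := by
    have := intervalIntegral.norm_integral_le_of_norm_le_const
      (f := F) (a := u) (b := v) (C := 1) (fun x _ => by rw [hFdef, vdc_norm_exp])
    rwa [one_mul, _root_.abs_of_nonneg (sub_nonneg.2 huv)] at this
  calc ‖∫ x in c..d, F x‖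
      ≤ ‖(∫ x in c..u, F x) + (∫ x in u..v, F x)‖ + ‖∫ x in v..d, F x‖ := by
        rw [hsplit]; exact norm_add_le _ _
    _ ≤ ‖∫ x in c..u, F x‖ + ‖∫ x in u..v, F x‖ + ‖∫ x in v..d, F x‖ := by
        have := norm_add_le (∫ x in c..u, F x) (∫ x in u..v, F x); linarith
    _ ≤ 3 / s + 2 / s + 3 / s := by linarith [b1, b2, b3, hlen]
    _ = 8 / s := by ring

private lemma vdc_main_pos (a b : ℝ) (hab : a < b) (Φ : ℝ → ℝ) (ρ : ℝ) (hρ : 0 < ρ)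
    (hΦ : ContDiffOn ℝ 2 Φ (Set.Ioo a b))
    (hψ : ∀ x ∈ Set.Ioo a b, ρ ≤ deriv (deriv Φ) x) :
    ‖∫ x in a..b, Complex.exp (Complex.I * (Φ x : ℂ))‖ ≤ 8 / Real.sqrt ρ := by
  set F : ℝ → ℂ := fun x => Complex.exp (Complex.I * (Φ x : ℂ)) with hFdef
  set e : ℕ → ℝ := fun n => (b - a) / (n + 2) with hedef
  have hba : 0 < b - a := sub_pos.2 hab
  have he0 : ∀ n, 0 < e n := fun n => div_pos hba (by positivity)
  have heanti : ∀ m n : ℕ, m ≤ n → e n ≤ e m := by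
    intro m n hmn
    apply div_le_div_of_nonneg_left hba.le (by positivity)
    have : (m : ℝ) ≤ n := Nat.cast_le.2 hmn
    linarith
  have hcd : ∀ n, a + e n ≤ b - e n := by
    intro n
    have h2 : e n ≤ (b - a) / 2 := by
      rw [hedef]
      apply div_le_div_of_nonneg_left hba.le (by norm_num)
      have : (0:ℝ) ≤ n := Nat.cast_nonneg n
      linarith
    linarith
  have hsubIoo : ∀ n, Icc (a + e n) (b - e n) ⊆ Set.Ioo a b := fun n x hx =>
    ⟨lt_of_lt_of_le (by linarith [he0 n]) hx.1, lt_of_le_of_lt hx.2 (by linarith [he0 n])⟩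
  have hmonoS : Monotone (fun n : ℕ => Icc (a + e n) (b - e n)) := by
    intro m n hmn
    exact Icc_subset_Icc (by linarith [heanti m n hmn]) (by linarith [heanti m n hmn])
  have hunion : (⋃ n : ℕ, Icc (a + e n) (b - e n)) = Set.Ioo a b := by
    apply Subset.antisymm
    · exact iUnion_subset hsubIoo
    · intro x hx
      have hm : 0 < min (x - a) (b - x) := lt_min (by linarith [hx.1]) (by linarith [hx.2])
      obtain ⟨n, hn⟩ := exists_nat_gt ((b - a) / min (x - a) (b - x))
      have hen : e n < min (x - a) (b - x) := by
        rw [hedef]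
        rw [div_lt_iff₀ (by positivity)]
        rw [div_lt_iff₀ hm] at hn
        have : (n : ℝ) < n + 2 := by linarith
        nlinarith [hm]
      refine mem_iUnion.2 ⟨n, ?_, ?_⟩
      · have := lt_min_iff.1 hen; linarith [this.1]
      · have := lt_min_iff.1 hen; linarith [this.2]
  have hcontF : ContinuousOn F (Set.Ioo a b) :=
    Complex.continuous_exp.comp_continuousOn
      (continuousOn_const.mul (Complex.continuous_ofReal.comp_continuousOn hΦ.continuousOn))
  have hint : IntegrableOn F (Set.Ioo a b) := by
    apply Integrable.mono' (g := fun _ => (1 : ℝ))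
    · exact integrableOn_const measure_Ioo_lt_top.ne
    · exact hcontF.aestronglyMeasurable measurableSet_Ioo
    · filter_upwards [ae_restrict_mem measurableSet_Ioo] with x _
      rw [hFdef, vdc_norm_exp]
  have htend : Tendsto (fun n : ℕ => ∫ x in Icc (a + e n) (b - e n), F x) atTop
      (nhds (∫ x in Set.Ioo a b, F x)) := by
    have := tendsto_setIntegral_of_monotone (μ := volume) (f := F)
      (s := fun n : ℕ => Icc (a + e n) (b - e n)) (fun n => measurableSet_Icc) hmonoS
      (by rw [hunion]; exact hint)
    rwa [hunion] at this
  have hbound : ∀ n : ℕ, ‖∫ x in Icc (a + e n) (b - e n), F x‖ ≤ 8 / Real.sqrt ρ := by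
    intro n
    have heq : ∫ x in Icc (a + e n) (b - e n), F x = ∫ x in (a + e n)..(b - e n), F x := by
      rw [intervalIntegral.integral_of_le (hcd n), ← integral_Icc_eq_integral_Ioc]
    rw [heq]
    exact vdc_core Φ (Set.Ioo a b) isOpen_Ioo hΦ _ _ ρ (hcd n) (hsubIoo n) hρ
      (fun x hx => hψ x (hsubIoo n hx))
  have heq2 : ∫ x in a..b, F x = ∫ x in Set.Ioo a b, F x := by
    rw [intervalIntegral.integral_of_le hab.le, integral_Ioc_eq_integral_Ioo]
  rw [heq2]
  exact le_of_tendsto htend.norm (Eventually.of_forall hbound)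


private lemma vdc_sign (g : ℝ → ℝ) (S : Set ℝ) (hS : S.OrdConnected) (hg : ContinuousOn g S)
    (ρ : ℝ) (hρ : 0 < ρ) (habs : ∀ x ∈ S, ρ ≤ |g x|) :
    ∀ x₀ ∈ S, 0 < g x₀ → ∀ x ∈ S, ρ ≤ g x := by
  intro x₀ h₀ hpos x hx
  have hne : ∀ y ∈ S, g y ≠ 0 := fun y hy h0 => by
    have := habs y hy; rw [h0, abs_zero] at this; linarith
  have hgx : 0 < g x := by
    rcases (hne x hx).lt_or_gt with h | h
    · exfalso
      have hsub := hS.uIcc_subset hx h₀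
      obtain ⟨z, hz, hz0⟩ := intermediate_value_uIcc (hg.mono hsub)
        (Set.mem_uIcc.2 (Or.inl ⟨h.le, hpos.le⟩))
      exact hne z (hsub hz) hz0
    · exact h
  have := habs x hx
  rwa [_root_.abs_of_pos hgx] at this

/-- **Van der Corput's lemma** (second derivative case): if `Φ` is `C²` on the nonempty
open interval `(a, b)` with `|Φ''(x)| ≥ ρ > 0` there, then
`|∫_a^b e^{iΦ(x)} dx| ≤ 8 ρ^{-1/2}`. -/
theorem vanDerCorput_second_deriv (a b : ℝ) (hab : a < b) (Φ : ℝ → ℝ) (ρ : ℝ) (hρ : 0 < ρ)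
    (hΦ : ContDiffOn ℝ 2 Φ (Set.Ioo a b))
    (hΦ'' : ∀ x ∈ Set.Ioo a b, ρ ≤ |deriv (deriv Φ) x|) :
    ‖∫ x in a..b, Complex.exp (Complex.I * (Φ x : ℂ))‖ ≤ 8 * ρ ^ (-(1 / 2 : ℝ)) := by
  have hrpow : 8 * ρ ^ (-(1 / 2 : ℝ)) = 8 / Real.sqrt ρ := by
    rw [Real.rpow_neg hρ.le, Real.sqrt_eq_rpow]; norm_num [div_eq_mul_inv]
  rw [hrpow]
  set ψ := deriv (deriv Φ) with hψdef
  have hψcont : ContinuousOn ψ (Set.Ioo a b) :=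
    (hΦ.deriv_of_isOpen isOpen_Ioo (by norm_num)).continuousOn_deriv_of_isOpen isOpen_Ioo le_rfl
  have hx₀ : (a + b) / 2 ∈ Set.Ioo a b := ⟨by linarith, by linarith⟩
  have hne : ψ ((a + b) / 2) ≠ 0 := fun h0 => by
    have := hΦ'' _ hx₀; rw [h0, abs_zero] at this; linarith
  rcases hne.lt_or_gt with hneg | hpos
  · -- negative case : apply positive case to -Φ and conjugate
    have hP := vdc_sign (fun x => -ψ x) (Set.Ioo a b) Set.ordConnected_Ioo hψcont.neg ρ hρ
      (fun x hx => by rw [abs_neg]; exact hΦ'' x hx) ((a + b) / 2) hx₀ (by simpa using hneg)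
    have hΨ : ContDiffOn ℝ 2 (fun x => -Φ x) (Set.Ioo a b) := hΦ.neg
    have hd2 : deriv (deriv (fun x => -Φ x)) = fun x => -ψ x := by
      have h1 : deriv (fun x => -Φ x) = fun x => -deriv Φ x := funext fun x => deriv.neg
      rw [h1]
      funext x
      show deriv (fun y => -deriv Φ y) x = -deriv (deriv Φ) x
      exact deriv.neg
    have key := vdc_main_pos a b hab (fun x => -Φ x) ρ hρ hΨ
      (by rw [hd2]; exact fun x hx => hP x hx)
    have hconjpt : ∀ x : ℝ, Complex.exp (Complex.I * ((-Φ x : ℝ) : ℂ)) =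
        (starRingEnd ℂ) (Complex.exp (Complex.I * (Φ x : ℂ))) := by
      intro x
      rw [← Complex.exp_conj, map_mul, Complex.conj_I, Complex.conj_ofReal]
      push_cast; ring_nf
    calc ‖∫ x in a..b, Complex.exp (Complex.I * (Φ x : ℂ))‖
        = ‖(starRingEnd ℂ) (∫ x in a..b, Complex.exp (Complex.I * (Φ x : ℂ)))‖ := by
          rw [starRingEnd_apply, norm_star]
      _ = ‖∫ x in a..b, (starRingEnd ℂ) (Complex.exp (Complex.I * (Φ x : ℂ)))‖ := by
          rw [intervalIntegral, intervalIntegral, integral_conj, integral_conj, map_sub]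
      _ = ‖∫ x in a..b, Complex.exp (Complex.I * ((-Φ x : ℝ) : ℂ))‖ := by
          congr 1
          exact intervalIntegral.integral_congr fun x _ => (hconjpt x).symm
      _ ≤ 8 / Real.sqrt ρ := key
  · -- positive case
    have hP := vdc_sign ψ (Set.Ioo a b) Set.ordConnected_Ioo hψcont ρ hρ
      (fun x hx => hΦ'' x hx) ((a + b) / 2) hx₀ hpos
    exact vdc_main_pos a b hab Φ ρ hρ hΦ hP
end

section
/- Let m : ℝ → ℂ be the function m(x) = e^{i/x} (for x ≠ 0, arbitrarily defined at 0), let ρ > 0, and set I = [ρ^{-1/3}/2, ρ^{-1/3}]. Then for every y ∈ ℝ, |∫_I e^{i(1/x + 2πxy)} dx| ≤ M ρ^{-1/2}, where M is the universal constant from the van der Corput lemma for second derivatives. -/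
open Real MeasureTheory intervalIntegral Set

lemma vdc1_pos (a b δ : ℝ) (hab : a ≤ b) (hδ : 0 < δ) (f g g' : ℝ → ℝ)
    (hf : ∀ x ∈ Set.Icc a b, HasDerivAt f (g x) x)
    (hg : ∀ x ∈ Set.Icc a b, HasDerivAt g (g' x) x)
    (hg'c : ContinuousOn g' (Set.Icc a b))
    (hg'0 : ∀ x ∈ Set.Icc a b, 0 ≤ g' x)
    (hgδ : ∀ x ∈ Set.Icc a b, δ ≤ g x) :
    ‖∫ x in a..b, Complex.exp ((f x : ℂ) * Complex.I)‖ ≤ 3 / δ := by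
  have huIcc : Set.uIcc a b = Set.Icc a b := Set.uIcc_of_le hab
  have hgpos : ∀ x ∈ Set.Icc a b, 0 < g x := fun x hx => lt_of_lt_of_le hδ (hgδ x hx)
  have hgne : ∀ x ∈ Set.Icc a b, g x ≠ 0 := fun x hx => (hgpos x hx).ne'
  set E : ℝ → ℂ := fun x => Complex.exp ((f x : ℂ) * Complex.I) with hE_def
  set F : ℝ → ℂ := fun x => -Complex.I * E x / (g x : ℂ) with hF_def
  set w : ℝ → ℂ := fun x => Complex.I * E x * (g' x : ℂ) / ((g x : ℂ)) ^ 2 with hw_def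
  have hE : ∀ x ∈ Set.Icc a b, HasDerivAt E (E x * ((g x : ℂ) * Complex.I)) x := by
    intro x hx
    exact (((hf x hx).ofReal_comp).mul_const Complex.I).cexp
  have hEnorm : ∀ x, ‖E x‖ = 1 := fun x => Complex.norm_exp_ofReal_mul_I (f x)
  have hEabs : ∀ x, ‖E x‖ = 1 := fun x => by
    exact hEnorm x
  have hEc : ContinuousOn E (Set.Icc a b) := fun x hx => (hE x hx).continuousAt.continuousWithinAt
  have hgc : ContinuousOn g (Set.Icc a b) := fun x hx => (hg x hx).continuousAt.continuousWithinAt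
  have hF : ∀ x ∈ Set.Icc a b, HasDerivAt F (E x + w x) x := by
    intro x hx
    have hgx : ((g x : ℂ)) ≠ 0 := Complex.ofReal_ne_zero.2 (hgne x hx)
    have h2 : HasDerivAt (fun t => ((g t : ℝ) : ℂ)) ((g' x : ℂ)) x := (hg x hx).ofReal_comp
    have h3 := ((hE x hx).const_mul (-Complex.I)).div h2 hgx
    refine h3.congr_deriv ?_
    symm
    simp only [hw_def]
    field_simp
    linear_combination (E x * ((g x : ℂ)) ^ 2) * Complex.I_sq
  have hwc : ContinuousOn w (Set.Icc a b) := by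
    apply ContinuousOn.div
    · exact (continuousOn_const.mul hEc).mul
        (Complex.continuous_ofReal.comp_continuousOn hg'c)
    · exact (Complex.continuous_ofReal.comp_continuousOn hgc).pow 2
    · intro x hx
      exact pow_ne_zero 2 (Complex.ofReal_ne_zero.2 (hgne x hx))
  have hwint : IntervalIntegrable w volume a b := (hwc.mono huIcc.subset).intervalIntegrable
  have hEint : IntervalIntegrable E volume a b := (hEc.mono huIcc.subset).intervalIntegrable
  have hsum : ∫ x in a..b, (E x + w x) = F b - F a := by
    apply intervalIntegral.integral_eq_sub_of_hasDerivAt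
    · intro x hx; exact hF x (huIcc ▸ hx)
    · exact hEint.add hwint
  have hsplit : ∫ x in a..b, E x = (F b - F a) - ∫ x in a..b, w x := by
    rw [← hsum, intervalIntegral.integral_add hEint hwint]; ring
  -- bound the w-integral
  have hGw : ∫ x in a..b, ‖w x‖ = (g a)⁻¹ - (g b)⁻¹ := by
    have hcongr : ∀ x ∈ Set.uIcc a b, ‖w x‖ = g' x / (g x) ^ 2 := by
      intro x hx
      rw [huIcc] at hx
      have h1 : ‖w x‖ = |g' x| / (g x) ^ 2 := by
        simp only [hw_def, norm_div, norm_mul, norm_pow,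
          Complex.norm_real, Complex.norm_I, Real.norm_eq_abs, sq_abs]
        simp [hEabs]
      rw [h1, abs_of_nonneg (hg'0 x hx)]
    rw [intervalIntegral.integral_congr hcongr]
    have hderiv : ∀ x ∈ Set.uIcc a b, HasDerivAt (fun t => -(g t)⁻¹) (g' x / (g x) ^ 2) x := by
      intro x hx
      rw [huIcc] at hx
      have := ((hg x hx).inv (hgne x hx)).neg
      refine this.congr_deriv ?_
      symm
      field_simp
    have hint : IntervalIntegrable (fun x => g' x / (g x) ^ 2) volume a b := by
      apply ContinuousOn.intervalIntegrable
      rw [huIcc]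
      exact hg'c.div (hgc.pow 2) (fun x hx => pow_ne_zero 2 (hgne x hx))
    rw [intervalIntegral.integral_eq_sub_of_hasDerivAt hderiv hint]
    ring
  have hwbound : ‖∫ x in a..b, w x‖ ≤ 1 / δ := by
    calc ‖∫ x in a..b, w x‖ ≤ ∫ x in a..b, ‖w x‖ :=
          intervalIntegral.norm_integral_le_integral_norm hab
      _ = (g a)⁻¹ - (g b)⁻¹ := hGw
      _ ≤ 1 / δ := by
          have h1 : (g a)⁻¹ ≤ 1 / δ := by
            rw [one_div]
            exact inv_anti₀ hδ (hgδ a ⟨le_refl a, hab⟩)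
          have h2 : 0 < (g b)⁻¹ := inv_pos.2 (hgpos b ⟨hab, le_refl b⟩)
          linarith
  have hFnorm : ∀ x ∈ Set.Icc a b, ‖F x‖ ≤ 1 / δ := by
    intro x hx
    have : ‖F x‖ = (g x)⁻¹ := by
      simp only [hF_def, norm_div, norm_mul, norm_neg,
        Complex.norm_real, Complex.norm_I, Real.norm_eq_abs, abs_of_pos (hgpos x hx)]
      simp [hEabs x]
    rw [this, one_div]
    exact inv_anti₀ hδ (hgδ x hx)
  calc ‖∫ x in a..b, E x‖ = ‖(F b - F a) - ∫ x in a..b, w x‖ := by rw [hsplit]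
    _ ≤ ‖F b - F a‖ + ‖∫ x in a..b, w x‖ := norm_sub_le _ _
    _ ≤ (‖F b‖ + ‖F a‖) + 1 / δ := add_le_add (norm_sub_le _ _) hwbound
    _ ≤ (1 / δ + 1 / δ) + 1 / δ := by
        have := hFnorm b ⟨hab, le_refl b⟩
        have := hFnorm a ⟨le_refl a, hab⟩
        linarith
    _ = 3 / δ := by ring
lemma vdc1_neg (a b δ : ℝ) (hab : a ≤ b) (hδ : 0 < δ) (f g g' : ℝ → ℝ)
    (hf : ∀ x ∈ Set.Icc a b, HasDerivAt f (g x) x)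
    (hg : ∀ x ∈ Set.Icc a b, HasDerivAt g (g' x) x)
    (hg'c : ContinuousOn g' (Set.Icc a b))
    (hg'0 : ∀ x ∈ Set.Icc a b, 0 ≤ g' x)
    (hgδ : ∀ x ∈ Set.Icc a b, g x ≤ -δ) :
    ‖∫ x in a..b, Complex.exp ((f x : ℂ) * Complex.I)‖ ≤ 3 / δ := by
  have hmem : ∀ t ∈ Set.Icc (-b) (-a), -t ∈ Set.Icc a b := by
    intro t ht
    exact ⟨le_neg.mp ht.2, neg_le.mp ht.1⟩
  have key := vdc1_pos (-b) (-a) δ (neg_le_neg hab) hδ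
      (fun t => f (-t)) (fun t => -g (-t)) (fun t => g' (-t))
      (fun t ht => by
        have h1 := (hf (-t) (hmem t ht)).comp t (hasDerivAt_neg t)
        simpa [Function.comp_def] using h1)
      (fun t ht => by
        have h1 := ((hg (-t) (hmem t ht)).comp t (hasDerivAt_neg t)).neg
        simpa [Function.comp_def, Pi.neg_def] using h1)
      (hg'c.comp continuous_neg.continuousOn hmem)
      (fun t ht => hg'0 (-t) (hmem t ht))
      (fun t ht => by show δ ≤ -g (-t); linarith [hgδ (-t) (hmem t ht)])
  have heq : (∫ t in (-b)..(-a), Complex.exp ((f (-t) : ℂ) * Complex.I))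
      = ∫ x in a..b, Complex.exp ((f x : ℂ) * Complex.I) := by
    rw [intervalIntegral.integral_comp_neg (fun x => Complex.exp ((f x : ℂ) * Complex.I))]
    simp
  rw [heq] at key
  exact key

lemma vdc2 (a b lam : ℝ) (hab : a ≤ b) (hlam : 0 < lam) (f g g' : ℝ → ℝ)
    (hf : ∀ x ∈ Set.Icc a b, HasDerivAt f (g x) x)
    (hg : ∀ x ∈ Set.Icc a b, HasDerivAt g (g' x) x)
    (hg'c : ContinuousOn g' (Set.Icc a b))
    (hg'lam : ∀ x ∈ Set.Icc a b, lam ≤ g' x) :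
    ‖∫ x in a..b, Complex.exp ((f x : ℂ) * Complex.I)‖ ≤ 8 / Real.sqrt lam := by
  set δ := Real.sqrt lam with hδ_def
  have hδ : 0 < δ := Real.sqrt_pos.2 hlam
  have hδsq : δ ^ 2 = lam := Real.sq_sqrt hlam.le
  have hgc : ContinuousOn g (Set.Icc a b) := fun x hx => (hg x hx).continuousAt.continuousWithinAt
  have hfc : ContinuousOn f (Set.Icc a b) := fun x hx => (hf x hx).continuousAt.continuousWithinAt
  have hEc : ContinuousOn (fun x => Complex.exp ((f x : ℂ) * Complex.I)) (Set.Icc a b) :=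
    Complex.continuous_exp.comp_continuousOn
      ((Complex.continuous_ofReal.comp_continuousOn hfc).mul continuousOn_const)
  have hMVT : ∀ x ∈ Set.Icc a b, ∀ y ∈ Set.Icc a b, x ≤ y → lam * (y - x) ≤ g y - g x := by
    intro x hx y hy hxy
    have hsub : Set.Icc x y ⊆ Set.Icc a b := Set.Icc_subset_Icc hx.1 hy.2
    have hu : Set.uIcc x y = Set.Icc x y := Set.uIcc_of_le hxy
    have hint : IntervalIntegrable g' volume x y :=
      ((hg'c.mono hsub).mono hu.subset).intervalIntegrable
    have heq : ∫ t in x..y, g' t = g y - g x :=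
      intervalIntegral.integral_eq_sub_of_hasDerivAt
        (fun t ht => hg t (hsub (hu ▸ ht))) hint
    have hmono := intervalIntegral.integral_mono_on hxy
      intervalIntegrable_const hint (fun t ht => hg'lam t (hsub ht))
    rw [intervalIntegral.integral_const] at hmono
    rw [← heq]
    simpa [smul_eq_mul, mul_comm] using hmono
  have hgmono : ∀ x ∈ Set.Icc a b, ∀ y ∈ Set.Icc a b, x ≤ y → g x ≤ g y := by
    intro x hx y hy hxy
    have h1 := hMVT x hx y hy hxy
    nlinarith [mul_nonneg hlam.le (sub_nonneg.2 hxy)]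
  set S := {x | x ∈ Set.Icc a b ∧ g x ≤ -δ} with hS_def
  set T := {x | x ∈ Set.Icc a b ∧ δ ≤ g x} with hT_def
  set u := sSup (insert a S) with hu_def
  set v := sInf (insert b T) with hv_def
  have hSb : BddAbove (insert a S) := ⟨b, by rintro x (rfl | hx); exacts [hab, hx.1.2]⟩
  have hSne : (insert a S).Nonempty := ⟨a, Set.mem_insert a S⟩
  have hTb : BddBelow (insert b T) := ⟨a, by rintro x (rfl | hx); exacts [hab, hx.1.1]⟩
  have hTne : (insert b T).Nonempty := ⟨b, Set.mem_insert b T⟩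
  have hau : a ≤ u := le_csSup hSb (Set.mem_insert a S)
  have hub : u ≤ b := csSup_le hSne (by rintro x (rfl | hx); exacts [hab, hx.1.2])
  have hav : a ≤ v := le_csInf hTne (by rintro x (rfl | hx); exacts [hab, hx.1.1])
  have hvb : v ≤ b := csInf_le hTb (Set.mem_insert b T)
  have huv : u ≤ v := by
    by_contra h
    push_neg at h
    obtain ⟨s, hs, hvs⟩ := exists_lt_of_lt_csSup hSne h
    rcases hs with rfl | hs
    · exact absurd hvs (not_lt.2 hav)
    · obtain ⟨t, ht, hts⟩ := exists_lt_of_csInf_lt hTne hvs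
      rcases ht with rfl | ht
      · exact absurd (lt_of_lt_of_le hts hs.1.2) (lt_irrefl _)
      · have hmn := hgmono t ht.1 s hs.1 hts.le
        linarith [ht.2, hs.2, hδ]
  have hSclosed : IsClosed S := by
    have hSeq : S = Set.Icc a b ∩ g ⁻¹' Set.Iic (-δ) := by
      ext x
      simp [hS_def, Set.mem_inter_iff, Set.mem_preimage, Set.mem_Iic]
    rw [hSeq]
    exact hgc.preimage_isClosed_of_isClosed isClosed_Icc isClosed_Iic
  have hTclosed : IsClosed T := by
    have hTeq : T = Set.Icc a b ∩ g ⁻¹' Set.Ici δ := by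
      ext x
      simp [hT_def, Set.mem_inter_iff, Set.mem_preimage, Set.mem_Ici]
    rw [hTeq]
    exact hgc.preimage_isClosed_of_isClosed isClosed_Icc isClosed_Ici
  have hgu : a < u → u ∈ S := by
    intro h
    have hSne' : S.Nonempty := by
      by_contra hemp
      rw [Set.not_nonempty_iff_eq_empty] at hemp
      rw [hu_def, hemp] at h
      simp at h
    have hSb' : BddAbove S := hSb.mono (Set.subset_insert a S)
    have hSS : sSup S ∈ S := hSclosed.csSup_mem hSne' hSb'
    have hsup : u = a ⊔ sSup S := by rw [hu_def, csSup_insert hSb' hSne']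
    rcases le_total (sSup S) a with hle | hle
    · rw [hsup, sup_eq_left.2 hle] at h; exact absurd h (lt_irrefl a)
    · rwa [hsup, sup_eq_right.2 hle]
  have hgv : v < b → v ∈ T := by
    intro h
    have hTne' : T.Nonempty := by
      by_contra hemp
      rw [Set.not_nonempty_iff_eq_empty] at hemp
      rw [hv_def, hemp] at h
      simp at h
    have hTb' : BddBelow T := hTb.mono (Set.subset_insert b T)
    have hTT : sInf T ∈ T := hTclosed.csInf_mem hTne' hTb'
    have hinf : v = b ⊓ sInf T := by rw [hv_def, csInf_insert hTb' hTne']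
    rcases le_total b (sInf T) with hle | hle
    · rw [hinf, inf_eq_left.2 hle] at h; exact absurd h (lt_irrefl b)
    · rwa [hinf, inf_eq_right.2 hle]
  -- left piece
  have hleft : ‖∫ x in a..u, Complex.exp ((f x : ℂ) * Complex.I)‖ ≤ 3 / δ := by
    rcases eq_or_lt_of_le hau with heq | hlt
    · rw [← heq, intervalIntegral.integral_same, norm_zero]
      positivity
    · have huS := hgu hlt
      have hsub : Set.Icc a u ⊆ Set.Icc a b := Set.Icc_subset_Icc le_rfl hub
      exact vdc1_neg a u δ hlt.le hδ f g g'
        (fun x hx => hf x (hsub hx)) (fun x hx => hg x (hsub hx)) (hg'c.mono hsub)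
        (fun x hx => le_trans hlam.le (hg'lam x (hsub hx)))
        (fun x hx => le_trans (hgmono x (hsub hx) u huS.1 hx.2) huS.2)
  -- right piece
  have hright : ‖∫ x in v..b, Complex.exp ((f x : ℂ) * Complex.I)‖ ≤ 3 / δ := by
    rcases eq_or_lt_of_le hvb with heq | hlt
    · rw [heq, intervalIntegral.integral_same, norm_zero]
      positivity
    · have hvT := hgv hlt
      have hsub : Set.Icc v b ⊆ Set.Icc a b := Set.Icc_subset_Icc hav le_rfl
      exact vdc1_pos v b δ hlt.le hδ f g g'
        (fun x hx => hf x (hsub hx)) (fun x hx => hg x (hsub hx)) (hg'c.mono hsub)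
        (fun x hx => le_trans hlam.le (hg'lam x (hsub hx)))
        (fun x hx => le_trans hvT.2 (hgmono v hvT.1 x (hsub hx) hx.1))
  -- middle piece
  have hmid : ‖∫ x in u..v, Complex.exp ((f x : ℂ) * Complex.I)‖ ≤ 2 * δ / lam := by
    rcases eq_or_lt_of_le huv with heq | hlt
    · rw [heq, intervalIntegral.integral_same, norm_zero]
      positivity
    · have hvA : a < v := lt_of_le_of_lt hau hlt
      have huB : u < b := lt_of_lt_of_le hlt hvb
      have hgvle : g v ≤ δ := by
        have hcl : v ∈ closure (Set.Ico a v) := by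
          rw [closure_Ico (ne_of_lt hvA)]; exact ⟨hav, le_rfl⟩
        have hNB : (nhdsWithin v (Set.Ico a v)).NeBot := mem_closure_iff_nhdsWithin_neBot.1 hcl
        have hsub2 : Set.Ico a v ⊆ Set.Icc a b := fun x hx => ⟨hx.1, le_trans hx.2.le hvb⟩
        have htend : Filter.Tendsto g (nhdsWithin v (Set.Ico a v)) (nhds (g v)) :=
          (hgc.continuousWithinAt ⟨hav, hvb⟩).mono hsub2
        refine le_of_tendsto htend (eventually_mem_nhdsWithin.mono ?_)
        intro x hx
        have hxI : x ∈ Set.Icc a b := hsub2 hx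
        by_contra hgt
        push_neg at hgt
        have hxT : x ∈ T := ⟨hxI, hgt.le⟩
        exact absurd (csInf_le hTb (Set.mem_insert_of_mem b hxT)) (not_le.2 hx.2)
      have hgule : -δ ≤ g u := by
        have hcl : u ∈ closure (Set.Ioc u b) := by
          rw [closure_Ioc (ne_of_lt huB)]; exact ⟨le_rfl, hub⟩
        have hNB : (nhdsWithin u (Set.Ioc u b)).NeBot := mem_closure_iff_nhdsWithin_neBot.1 hcl
        have hsub2 : Set.Ioc u b ⊆ Set.Icc a b := fun x hx => ⟨le_trans hau hx.1.le, hx.2⟩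
        have htend : Filter.Tendsto g (nhdsWithin u (Set.Ioc u b)) (nhds (g u)) :=
          (hgc.continuousWithinAt ⟨hau, hub⟩).mono hsub2
        refine ge_of_tendsto htend (eventually_mem_nhdsWithin.mono ?_)
        intro x hx
        have hxI : x ∈ Set.Icc a b := hsub2 hx
        by_contra hgt
        push_neg at hgt
        have hxS : x ∈ S := ⟨hxI, hgt.le⟩
        exact absurd (le_csSup hSb (Set.mem_insert_of_mem a hxS)) (not_le.2 hx.1)
      have hlen : v - u ≤ 2 * δ / lam := by
        have h1 := hMVT u ⟨hau, hub⟩ v ⟨hav, hvb⟩ huv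
        rw [le_div_iff₀ hlam]
        nlinarith
      calc ‖∫ x in u..v, Complex.exp ((f x : ℂ) * Complex.I)‖
          ≤ 1 * |v - u| := intervalIntegral.norm_integral_le_of_norm_le_const
            (fun x _ => le_of_eq (Complex.norm_exp_ofReal_mul_I (f x)))
        _ = v - u := by rw [one_mul, abs_of_nonneg (sub_nonneg.2 huv)]
        _ ≤ 2 * δ / lam := hlen
  -- combine
  have hiau : IntervalIntegrable (fun x => Complex.exp ((f x : ℂ) * Complex.I)) volume a u :=
    ((hEc.mono (Set.Icc_subset_Icc le_rfl hub)).mono (Set.uIcc_of_le hau).subset).intervalIntegrable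
  have hiuv : IntervalIntegrable (fun x => Complex.exp ((f x : ℂ) * Complex.I)) volume u v :=
    ((hEc.mono (Set.Icc_subset_Icc hau hvb)).mono (Set.uIcc_of_le huv).subset).intervalIntegrable
  have hivb : IntervalIntegrable (fun x => Complex.exp ((f x : ℂ) * Complex.I)) volume v b :=
    ((hEc.mono (Set.Icc_subset_Icc hav le_rfl)).mono (Set.uIcc_of_le hvb).subset).intervalIntegrable
  have hsplit : (∫ x in a..b, Complex.exp ((f x : ℂ) * Complex.I))
      = (∫ x in a..u, Complex.exp ((f x : ℂ) * Complex.I))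
        + (∫ x in u..v, Complex.exp ((f x : ℂ) * Complex.I))
        + (∫ x in v..b, Complex.exp ((f x : ℂ) * Complex.I)) := by
    rw [intervalIntegral.integral_add_adjacent_intervals hiau hiuv,
      intervalIntegral.integral_add_adjacent_intervals (hiau.trans hiuv) hivb]
  have hfinal : 3 / δ + 2 * δ / lam + 3 / δ = 8 / δ := by
    rw [← hδsq]
    field_simp
    ring
  calc ‖∫ x in a..b, Complex.exp ((f x : ℂ) * Complex.I)‖
      ≤ ‖(∫ x in a..u, Complex.exp ((f x : ℂ) * Complex.I))
          + (∫ x in u..v, Complex.exp ((f x : ℂ) * Complex.I))‖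
        + ‖∫ x in v..b, Complex.exp ((f x : ℂ) * Complex.I)‖ := by
        rw [hsplit]; exact norm_add_le _ _
    _ ≤ ‖∫ x in a..u, Complex.exp ((f x : ℂ) * Complex.I)‖
        + ‖∫ x in u..v, Complex.exp ((f x : ℂ) * Complex.I)‖
        + ‖∫ x in v..b, Complex.exp ((f x : ℂ) * Complex.I)‖ := by
        have := norm_add_le (∫ x in a..u, Complex.exp ((f x : ℂ) * Complex.I))
          (∫ x in u..v, Complex.exp ((f x : ℂ) * Complex.I))
        linarith
    _ ≤ 3 / δ + 2 * δ / lam + 3 / δ := by linarith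
    _ = 8 / δ := hfinal


/-- Van der Corput estimate applied to the phase `Φ_y(x) = 1/x + 2πxy` on the interval
`I = [ρ^{-1/3}/2, ρ^{-1/3}]`: for every `y ∈ ℝ`,
`|∫_I e^{i(1/x + 2πxy)} dx| ≤ M ρ^{-1/2}` with the universal constant `M = 8` from the
van der Corput lemma. -/
theorem vanDerCorput_estimate_phase (ρ : ℝ) (hρ : 0 < ρ) (y : ℝ) :
    ‖∫ x in (ρ ^ (-(1 / 3 : ℝ)) / 2)..(ρ ^ (-(1 / 3 : ℝ))),
        Complex.exp (Complex.I * ((x⁻¹ + 2 * π * x * y : ℝ) : ℂ))‖ ≤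
      8 * ρ ^ (-(1 / 2 : ℝ)) := by
  have hb : (0:ℝ) < ρ ^ (-(1 / 3 : ℝ)) := Real.rpow_pos_of_pos hρ _
  set b : ℝ := ρ ^ (-(1 / 3 : ℝ)) with hb_def
  set a : ℝ := b / 2 with ha_def
  have ha : 0 < a := by positivity
  have hab : a ≤ b := by rw [ha_def]; linarith
  have hpos : ∀ x ∈ Set.Icc a b, 0 < x := fun x hx => lt_of_lt_of_le ha hx.1
  have hb3 : b ^ 3 = ρ⁻¹ := by
    rw [hb_def, ← Real.rpow_natCast (ρ ^ (-(1/3:ℝ))) 3, ← Real.rpow_mul hρ.le]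
    norm_num
    exact Real.rpow_neg_one ρ
  have hf : ∀ x ∈ Set.Icc a b,
      HasDerivAt (fun x : ℝ => x⁻¹ + 2*π*x*y) (2*π*y - (x^2)⁻¹) x := by
    intro x hx
    have hx0 := (hpos x hx).ne'
    have h1 : HasDerivAt (fun t : ℝ => t⁻¹) (-(x^2)⁻¹) x := hasDerivAt_inv hx0
    have h2 : HasDerivAt (fun t : ℝ => 2*π*t*y) (2*π*y) x := by
      simpa using ((hasDerivAt_id x).const_mul (2*π)).mul_const y
    rw [show 2*π*y - (x^2)⁻¹ = -(x^2)⁻¹ + 2*π*y by ring]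
    exact h1.add h2
  have hg : ∀ x ∈ Set.Icc a b,
      HasDerivAt (fun x : ℝ => 2*π*y - (x^2)⁻¹) ((2*x)/((x^2)^2)) x := by
    intro x hx
    have hx2 : (x^2) ≠ 0 := pow_ne_zero 2 (hpos x hx).ne'
    have h1 := (hasDerivAt_pow 2 x).inv hx2
    have h2 := h1.const_sub (2*π*y)
    rw [show (2*x)/((x^2)^2) = -(-(((2:ℕ):ℝ) * x ^ (2 - 1)) / (x ^ 2) ^ 2) by norm_num [neg_div]]
    exact h2
  have hg'c : ContinuousOn (fun x : ℝ => (2*x)/((x^2)^2)) (Set.Icc a b) := by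
    apply ContinuousOn.div
    · exact (continuous_const.mul continuous_id).continuousOn
    · exact ((continuous_pow 2).pow 2).continuousOn
    · intro x hx; exact pow_ne_zero 2 (pow_ne_zero 2 (hpos x hx).ne')
  have hg'lam : ∀ x ∈ Set.Icc a b, ρ ≤ (2*x)/((x^2)^2) := by
    intro x hx
    have hx0 := hpos x hx
    have hx3 : x^3 ≤ ρ⁻¹ := by rw [← hb3]; exact pow_le_pow_left₀ hx0.le hx.2 3
    have hρx3 : ρ * x^3 ≤ 1 := by
      calc ρ*x^3 ≤ ρ*ρ⁻¹ := by nlinarith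
        _ = 1 := mul_inv_cancel₀ hρ.ne'
    rw [le_div_iff₀ (by positivity)]
    nlinarith [hx0]
  have key := vdc2 a b ρ hab hρ (fun x : ℝ => x⁻¹ + 2*π*x*y)
    (fun x : ℝ => 2*π*y - (x^2)⁻¹) (fun x : ℝ => (2*x)/((x^2)^2)) hf hg hg'c hg'lam
  have hrhs : 8 / Real.sqrt ρ = 8 * ρ ^ (-(1/2:ℝ)) := by
    rw [Real.sqrt_eq_rpow, Real.rpow_neg hρ.le, div_eq_mul_inv]
  rw [hrhs] at key
  simpa [ha_def, hb_def, mul_comm] using key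
end

section
/- There is no constant C > 0 with the following property: for every interval I = [ρ^{-1/3}/2, ρ^{-1/3}] with ρ > 0, the function g_I(y) = ∫_I e^{i(1/x + 2πxy)} dx satisfies ‖g_I‖_{L^p(ℝ)} ≥ C^{-1} |I|^{(p-1)/p}, whenever p ∈ (2,∞) is fixed. Equivalently: if C ≥ 0 and K > 0 are constants such that |I|^{(p-2)/p} · ρ^{1/2 - 1/p} ≤ K for all ρ > 0 with |I| = ρ^{-1/3}/2, then a contradiction arises, since ρ^{1/6 - 1/(3p)} is unbounded as ρ → ∞ when p > 2. -/
open Real MeasureTheory intervalIntegral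

open scoped ENNReal

noncomputable section
namespace NoLB

/-- the oscillatory integrand -/
def ee (y x : ℝ) : ℂ := Complex.exp (Complex.I * ((x⁻¹ + 2*π*x*y : ℝ) : ℂ))

/-- derivative of the phase -/
def pd (y x : ℝ) : ℝ := 2*π*y - (x^2)⁻¹

lemma norm_ee (y x : ℝ) : ‖ee y x‖ = 1 := by
  simp [ee, Complex.norm_exp]

lemma hasDerivAt_pd {x : ℝ} (y : ℝ) (hx : x ≠ 0) :
    HasDerivAt (pd y) (2*(x^3)⁻¹) x := by
  have h1 : HasDerivAt (fun x : ℝ => (x^2)⁻¹) (-(2*x)/(x^2)^2) x := by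
    exact ((hasDerivAt_pow 2 x).inv (pow_ne_zero 2 hx)).congr_deriv (by ring_nf)
  have h2 : HasDerivAt (pd y) (0 - (-(2*x)/(x^2)^2)) x :=
    (hasDerivAt_const x _).sub h1
  convert h2 using 1
  field_simp
  ring

lemma hasDerivAt_ee {x : ℝ} (y : ℝ) (hx : x ≠ 0) :
    HasDerivAt (ee y) (Complex.I * (pd y x) * ee y x) x := by
  have hph : HasDerivAt (fun x : ℝ => x⁻¹ + 2*π*x*y) (pd y x) x := by
    have h1 : HasDerivAt (fun x : ℝ => x⁻¹) (-(x^2)⁻¹) x := by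
      simpa using hasDerivAt_inv hx
    have h2 : HasDerivAt (fun x : ℝ => 2*π*x*y) (2*π*y) x := by
      simpa [mul_comm, mul_assoc, mul_left_comm] using
        ((hasDerivAt_id x).const_mul (2*π)).mul_const y
    have : HasDerivAt (fun x : ℝ => x⁻¹ + 2*π*x*y) (-(x^2)⁻¹ + 2*π*y) x := h1.add h2
    convert this using 1
    simp [pd]; ring
  have hphC : HasDerivAt (fun x : ℝ => ((x⁻¹ + 2*π*x*y : ℝ) : ℂ)) ((pd y x : ℝ) : ℂ) x :=
    hph.ofReal_comp
  have h3 : HasDerivAt (fun x : ℝ => Complex.I * ((x⁻¹ + 2*π*x*y : ℝ) : ℂ))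
      (Complex.I * (pd y x)) x := hphC.const_mul Complex.I
  have h4 := h3.cexp
  unfold ee
  convert h4 using 1
  ring

lemma vdc1 (y c d δ : ℝ) (hc : 0 < c) (hcd : c ≤ d) (hδ : 0 < δ)
    (h : (∀ x ∈ Set.Icc c d, δ ≤ pd y x) ∨ (∀ x ∈ Set.Icc c d, pd y x ≤ -δ)) :
    ‖∫ x in c..d, ee y x‖ ≤ 3/δ := by
  have huIcc : Set.uIcc c d = Set.Icc c d := Set.uIcc_of_le hcd
  have habs : ∀ x ∈ Set.Icc c d, δ ≤ |pd y x| := by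
    intro x hx
    rcases h with h | h
    · exact le_trans (h x hx) (le_abs_self _)
    · have := h x hx; rw [abs_of_nonpos (by linarith)]; linarith
  have hne : ∀ x ∈ Set.Icc c d, pd y x ≠ 0 := by
    intro x hx h0
    have := habs x hx; rw [h0, abs_zero] at this; linarith
  have hx0 : ∀ x ∈ Set.Icc c d, x ≠ 0 := fun x hx => ne_of_gt (lt_of_lt_of_le hc hx.1)
  -- boundary term
  set F : ℝ → ℂ := fun x => ee y x / (Complex.I * pd y x) with hFdef
  -- correction integrand
  set corr : ℝ → ℂ := fun x => Complex.I * ee y x * ((2*(x^3)⁻¹ : ℝ) : ℂ) / ((pd y x : ℂ))^2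
    with hcorrdef
  have hF : ∀ x ∈ Set.Icc c d, HasDerivAt F (ee y x + corr x) x := by
    intro x hx
    have hx' := hx0 x hx
    have hpd := hne x hx
    have hu := hasDerivAt_ee y hx'
    have hv : HasDerivAt (fun x : ℝ => Complex.I * (pd y x : ℂ))
        (Complex.I * ((2*(x^3)⁻¹ : ℝ) : ℂ)) x :=
      ((hasDerivAt_pd y hx').ofReal_comp).const_mul Complex.I
    have hvne : Complex.I * (pd y x : ℂ) ≠ 0 := by
      simp [Complex.I_ne_zero, Complex.ofReal_ne_zero, hpd]
    have hder := hu.div hv hvne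
    have hpdC : (pd y x : ℂ) ≠ 0 := Complex.ofReal_ne_zero.mpr hpd
    refine HasDerivAt.congr_deriv hder ?_
    have hnum : Complex.I * (pd y x : ℂ) * ee y x * (Complex.I * (pd y x : ℂ))
        = -((pd y x : ℂ)^2 * ee y x) := by
      linear_combination ((pd y x : ℂ)^2 * ee y x) * Complex.I_sq
    have hcc : ((pd y x : ℂ))^2 * (((pd y x : ℂ))⁻¹)^2 = 1 := by
      rw [← mul_pow, mul_inv_cancel₀ hpdC, one_pow]
    rw [hnum, hcorrdef, mul_pow, Complex.I_sq]
    field_simp [hpdC]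
    ring
  -- continuity facts
  have hcont_pd : ContinuousOn (pd y) (Set.Icc c d) := by
    apply ContinuousOn.sub continuousOn_const
    exact ContinuousOn.inv₀ (by fun_prop) (fun x hx => pow_ne_zero 2 (hx0 x hx))
  have hcont_ee : ContinuousOn (ee y) (Set.Icc c d) := by
    unfold ee
    apply Complex.continuous_exp.comp_continuousOn
    apply ContinuousOn.mul continuousOn_const
    apply Complex.continuous_ofReal.comp_continuousOn
    exact ((ContinuousOn.inv₀ continuousOn_id hx0).add (by fun_prop))
  have hcont_corr : ContinuousOn corr (Set.Icc c d) := by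
    apply ContinuousOn.div
    · apply ContinuousOn.mul (continuousOn_const.mul hcont_ee)
      apply Complex.continuous_ofReal.comp_continuousOn
      exact continuousOn_const.mul (ContinuousOn.inv₀ (by fun_prop)
        (fun x hx => pow_ne_zero 3 (hx0 x hx)))
    · exact (Complex.continuous_ofReal.comp_continuousOn hcont_pd).pow 2
    · intro x hx
      exact pow_ne_zero 2 (Complex.ofReal_ne_zero.mpr (hne x hx))
  have hint_ee : IntervalIntegrable (ee y) volume c d :=
    (huIcc ▸ hcont_ee).intervalIntegrable
  have hint_corr : IntervalIntegrable corr volume c d :=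
    (huIcc ▸ hcont_corr).intervalIntegrable
  have key : ∫ x in c..d, (ee y x + corr x) = F d - F c :=
    intervalIntegral.integral_eq_sub_of_hasDerivAt (fun x hx => hF x (huIcc ▸ hx))
      ((huIcc ▸ (hcont_ee.add hcont_corr)).intervalIntegrable)
  have heq : ∫ x in c..d, ee y x = F d - F c - ∫ x in c..d, corr x := by
    rw [← key, intervalIntegral.integral_add hint_ee hint_corr]; ring
  -- norm of boundary terms
  have hnormF : ∀ x ∈ Set.Icc c d, ‖F x‖ ≤ 1/δ := by
    intro x hx
    have h1 : ‖ee y x‖ = 1 := norm_ee y x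
    have : ‖F x‖ = 1 / |pd y x| := by
      simp [hFdef, map_mul, Complex.norm_I, Complex.norm_real, h1]
    rw [this]
    exact one_div_le_one_div_of_le hδ (habs x hx)
  -- the correction integral
  have hcorr_norm : ∀ x ∈ Set.Icc c d, ‖corr x‖ = 2*(x^3)⁻¹ / (pd y x)^2 := by
    intro x hx
    have hx' : 0 < x := lt_of_lt_of_le hc hx.1
    have h1 : (0:ℝ) ≤ 2*(x^3)⁻¹ := by positivity
    have h2 : ‖ee y x‖ = 1 := norm_ee y x
    simp [hcorrdef, map_mul, map_div₀, map_pow,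
      Complex.norm_I, Complex.norm_real, abs_of_nonneg h1, sq_abs, h2, abs_of_pos hx']
  have hftc : ∫ x in c..d, 2*(x^3)⁻¹ / (pd y x)^2 = (pd y c)⁻¹ - (pd y d)⁻¹ := by
    have : ∀ x ∈ Set.uIcc c d, HasDerivAt (fun x => -(pd y x)⁻¹) (2*(x^3)⁻¹ / (pd y x)^2) x := by
      intro x hx
      rw [huIcc] at hx
      have : HasDerivAt (fun x => -(pd y x)⁻¹) (-(-(2*(x^3)⁻¹) / (pd y x)^2)) x :=
        ((hasDerivAt_pd y (hx0 x hx)).inv (hne x hx)).neg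
      convert this using 1
      ring
    have := intervalIntegral.integral_eq_sub_of_hasDerivAt this
      ((huIcc ▸ ((continuousOn_const.mul (ContinuousOn.inv₀ (by fun_prop)
        (fun x hx => pow_ne_zero 3 (hx0 x hx)))).div (hcont_pd.pow 2)
        (fun x hx => pow_ne_zero 2 (hne x hx)))).intervalIntegrable)
    rw [this]; ring
  have hcorr_int_bound : ‖∫ x in c..d, corr x‖ ≤ 1/δ := by
    have h1 : ‖∫ x in c..d, corr x‖ ≤ ∫ x in c..d, ‖corr x‖ :=
      intervalIntegral.norm_integral_le_integral_norm hcd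
    have h2 : ∫ x in c..d, ‖corr x‖ = ∫ x in c..d, 2*(x^3)⁻¹ / (pd y x)^2 := by
      apply intervalIntegral.integral_congr
      intro x hx; exact hcorr_norm x (huIcc ▸ hx)
    rw [h2, hftc] at h1
    apply le_trans h1
    have hcm := Set.left_mem_Icc.mpr hcd
    have hdm := Set.right_mem_Icc.mpr hcd
    rcases h with hp | hn
    · have h3 : (pd y c)⁻¹ ≤ δ⁻¹ := inv_anti₀ hδ (hp c hcm)
      have h4 : 0 < (pd y d)⁻¹ := inv_pos.mpr (lt_of_lt_of_le hδ (hp d hdm))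
      rw [one_div]; linarith
    · have h3 : pd y c < 0 := lt_of_le_of_lt (hn c hcm) (by linarith)
      have h5 : (pd y c)⁻¹ < 0 := inv_lt_zero.mpr h3
      have h7 : (-(pd y d))⁻¹ ≤ δ⁻¹ := inv_anti₀ hδ (by linarith [hn d hdm])
      rw [inv_neg] at h7
      rw [one_div]; linarith
  rw [heq]
  calc ‖F d - F c - ∫ x in c..d, corr x‖
      ≤ ‖F d - F c‖ + ‖∫ x in c..d, corr x‖ := norm_sub_le _ _
    _ ≤ (‖F d‖ + ‖F c‖) + ‖∫ x in c..d, corr x‖ := by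
        gcongr; exact norm_sub_le _ _
    _ ≤ (1/δ + 1/δ) + 1/δ :=
        add_le_add (add_le_add (hnormF d (Set.right_mem_Icc.mpr hcd))
          (hnormF c (Set.left_mem_Icc.mpr hcd))) hcorr_int_bound
    _ = 3/δ := by ring


lemma ee_intable (y u v : ℝ) (hu : 0 < u) (hv : 0 < v) :
    IntervalIntegrable (ee y) volume u v := by
  apply ContinuousOn.intervalIntegrable
  have h0 : ∀ x ∈ Set.uIcc u v, x ≠ 0 := by
    intro x hx
    have h1 : u ⊓ v ≤ x := hx.1
    have h2 : 0 < u ⊓ v := lt_min hu hv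
    exact ne_of_gt (lt_of_lt_of_le h2 h1)
  unfold ee
  apply Complex.continuous_exp.comp_continuousOn
  apply ContinuousOn.mul continuousOn_const
  apply Complex.continuous_ofReal.comp_continuousOn
  exact ((ContinuousOn.inv₀ continuousOn_id h0).add (by fun_prop))

lemma inv_sq_anti {u v : ℝ} (hu : 0 < u) (huv : u ≤ v) : (v^2)⁻¹ ≤ (u^2)⁻¹ :=
  inv_anti₀ (by positivity) (by nlinarith)

lemma gap (b c d δ : ℝ) (hb : 0 < b) (h1 : b/2 ≤ c) (h2 : c ≤ d) (h3 : d ≤ b)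
    (hδ : 0 < δ) (h4 : (c^2)⁻¹ - (d^2)⁻¹ ≤ 2*δ) : d - c ≤ 2*δ*b^3 := by
  have hc : 0 < c := by linarith
  have hd : 0 < d := by linarith
  have key : (c^2)⁻¹ - (d^2)⁻¹ = (d^2 - c^2)/(c^2*d^2) := by
    field_simp
  have h5 : (d^2 - c^2) ≤ 2*δ*(c^2*d^2) := by
    rw [key] at h4
    have := (div_le_iff₀ (by positivity : (0:ℝ) < c^2*d^2)).mp h4
    linarith
  have hcb : c^2 ≤ b^2 := by nlinarith
  have hdb : d^2 ≤ b^2 := by nlinarith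
  have h6 : c^2*d^2 ≤ b^4 := by nlinarith
  have h7 : (d - c)*b ≤ d^2 - c^2 := by nlinarith
  have h6' : 2*δ*(c^2*d^2) ≤ 2*δ*b^4 := by nlinarith
  have h8 : (d-c)*b ≤ (2*δ*b^3)*b := by nlinarith
  exact le_of_mul_le_mul_right h8 hb

set_option maxHeartbeats 1000000 in
lemma vdc2 (y b : ℝ) (hb : 0 < b) :
    ‖∫ x in (b/2)..b, ee y x‖ ≤ 8 * Real.sqrt (b^3) := by
  set s := Real.sqrt (b^3) with hsdef
  have hs : 0 < s := Real.sqrt_pos.mpr (by positivity)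
  have hs2 : s^2 = b^3 := Real.sq_sqrt (by positivity)
  set δ := s⁻¹ with hδdef
  have hδ : 0 < δ := inv_pos.mpr hs
  have h3δeq : 3/δ = 3*s := by rw [hδdef, div_eq_mul_inv, inv_inv]
  have hδb3 : 2*δ*b^3 = 2*s := by
    rw [hδdef, ← hs2]
    field_simp [ne_of_gt hs]
  have h3δ : 3/δ ≤ 8*s := by rw [h3δeq]; nlinarith
  set t := 2*π*y with htdef
  have hpd_eq : ∀ x, pd y x = t - (x^2)⁻¹ := fun x => rfl
  have hhalf : (0:ℝ) < b/2 := by linarith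
  have hbsq : ((b/2)^2)⁻¹ = 4*(b^2)⁻¹ := by
    field_simp
    ring
  rcases le_or_gt t ((b^2)⁻¹ - δ) with hB | hB
  · -- phase derivative ≤ -δ everywhere
    refine le_trans (vdc1 y (b/2) b δ hhalf (by linarith) hδ (Or.inr ?_)) h3δ
    intro x hx
    have : (b^2)⁻¹ ≤ (x^2)⁻¹ := inv_sq_anti (lt_of_lt_of_le hhalf hx.1) hx.2
    rw [hpd_eq]; linarith
  rcases le_or_gt (4*(b^2)⁻¹ + δ) t with hA | hA
  · -- phase derivative ≥ δ everywhere
    refine le_trans (vdc1 y (b/2) b δ hhalf (by linarith) hδ (Or.inl ?_)) h3δ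
    intro x hx
    have : (x^2)⁻¹ ≤ ((b/2)^2)⁻¹ := inv_sq_anti hhalf hx.1
    rw [hbsq] at this
    rw [hpd_eq]; linarith
  · -- middle case
    have hb2pos : (0:ℝ) < (b^2)⁻¹ := by positivity
    have htδpos : 0 < t + δ := by linarith
    set r1 := (Real.sqrt (t + δ))⁻¹ with hr1def
    have hr1pos : 0 < r1 := inv_pos.mpr (Real.sqrt_pos.mpr htδpos)
    have hr1sq : (r1^2)⁻¹ = t + δ := by
      rw [hr1def, ← Real.sqrt_inv, Real.sq_sqrt (by positivity), inv_inv]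
    have hr1b : r1 < b := by
      have h1 : (b^2)⁻¹ < (r1^2)⁻¹ := by rw [hr1sq]; linarith
      by_contra hcon
      push_neg at hcon
      have := inv_sq_anti hb hcon
      linarith
    set c' := max (b/2) r1 with hc'def
    have hc'1 : b/2 ≤ c' := le_max_left _ _
    have hc'2 : c' ≤ b := max_le (by linarith) hr1b.le
    have hc'pos : 0 < c' := lt_of_lt_of_le hhalf hc'1
    have hpdc' : (c'^2)⁻¹ ≤ t + δ := by
      rw [← hr1sq]
      exact inv_sq_anti hr1pos (le_max_right _ _)
    -- define d'
    rcases le_or_gt t δ with hC1 | hC2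
    · -- no right piece : phase derivative ≤ δ on everything right of c'
      have hsplit : (∫ x in (b/2)..b, ee y x)
          = (∫ x in (b/2)..c', ee y x) + (∫ x in c'..b, ee y x) :=
        (intervalIntegral.integral_add_adjacent_intervals
          (ee_intable y _ _ hhalf hc'pos) (ee_intable y _ _ hc'pos hb)).symm
      have hleft : ‖∫ x in (b/2)..c', ee y x‖ ≤ 3/δ := by
        rcases eq_or_lt_of_le hc'1 with he | hlt
        · rw [← he, intervalIntegral.integral_same]; simp; positivity
        · have hr1half : c' = r1 := by
            rw [hc'def, max_eq_right]
            rw [hc'def] at hlt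
            by_contra hcon
            rw [max_eq_left (by by_contra h'; push_neg at h'; exact hcon h'.le)] at hlt
            exact lt_irrefl _ hlt
          apply vdc1 y (b/2) c' δ hhalf hc'1 hδ (Or.inr ?_)
          intro x hx
          have hxpos : 0 < x := lt_of_lt_of_le hhalf hx.1
          have : (c'^2)⁻¹ ≤ (x^2)⁻¹ := inv_sq_anti hxpos hx.2
          rw [hr1half, hr1sq] at this
          rw [hpd_eq]; linarith
      have hmid : ‖∫ x in c'..b, ee y x‖ ≤ 2*δ*b^3 := by
        have hbd : ‖∫ x in c'..b, ee y x‖ ≤ 1 * |b - c'| :=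
          intervalIntegral.norm_integral_le_of_norm_le_const
            (fun x _ => le_of_eq (norm_ee y x))
        rw [one_mul, abs_of_nonneg (by linarith)] at hbd
        refine le_trans hbd (gap b c' b δ hb hc'1 hc'2 le_rfl hδ ?_)
        have h1 : pd y b ≤ δ := by rw [hpd_eq]; have : 0 < (b^2)⁻¹ := hb2pos; linarith
        rw [hpd_eq] at h1
        linarith
      rw [hsplit]
      calc ‖(∫ x in (b/2)..c', ee y x) + (∫ x in c'..b, ee y x)‖
          ≤ ‖∫ x in (b/2)..c', ee y x‖ + ‖∫ x in c'..b, ee y x‖ := norm_add_le _ _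
        _ ≤ 3/δ + 2*δ*b^3 := by linarith
        _ ≤ 8*s := by rw [h3δeq, hδb3]; nlinarith
    · -- right piece may exist
      have htδ2pos : 0 < t - δ := by linarith
      set r2 := (Real.sqrt (t - δ))⁻¹ with hr2def
      have hr2pos : 0 < r2 := inv_pos.mpr (Real.sqrt_pos.mpr htδ2pos)
      have hr2sq : (r2^2)⁻¹ = t - δ := by
        rw [hr2def, ← Real.sqrt_inv, Real.sq_sqrt (by positivity), inv_inv]
      have hr2half : b/2 < r2 := by
        have h1 : (r2^2)⁻¹ < ((b/2)^2)⁻¹ := by rw [hr2sq, hbsq]; linarith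
        by_contra hcon
        push_neg at hcon
        have := inv_sq_anti hr2pos hcon
        linarith
      have hr1r2 : r1 ≤ r2 := by
        apply inv_anti₀ (Real.sqrt_pos.mpr htδ2pos)
        exact Real.sqrt_le_sqrt (by linarith)
      set d' := min b r2 with hd'def
      have hd'1 : c' ≤ d' := le_min hc'2 (max_le (by linarith) hr1r2)
      have hd'2 : d' ≤ b := min_le_left _ _
      have hd'pos : 0 < d' := lt_of_lt_of_le hc'pos hd'1
      have hpdd' : t - δ ≤ (d'^2)⁻¹ := by
        rw [← hr2sq]
        exact inv_sq_anti hd'pos (min_le_right _ _)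
      have hsplit : (∫ x in (b/2)..b, ee y x)
          = (∫ x in (b/2)..c', ee y x) + (∫ x in c'..d', ee y x) + (∫ x in d'..b, ee y x) := by
        rw [intervalIntegral.integral_add_adjacent_intervals
          (ee_intable y _ _ hhalf hc'pos) (ee_intable y _ _ hc'pos hd'pos),
          intervalIntegral.integral_add_adjacent_intervals
          (ee_intable y _ _ hhalf hd'pos) (ee_intable y _ _ hd'pos hb)]
      have hleft : ‖∫ x in (b/2)..c', ee y x‖ ≤ 3/δ := by
        rcases eq_or_lt_of_le hc'1 with he | hlt
        · rw [← he, intervalIntegral.integral_same]; simp; positivity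
        · have hr1half : c' = r1 := by
            rcases max_cases (b/2) r1 with ⟨h1, h2⟩ | ⟨h1, h2⟩
            · rw [hc'def, h1] at hlt; exact absurd hlt (lt_irrefl _)
            · rw [hc'def, h1]
          apply vdc1 y (b/2) c' δ hhalf hc'1 hδ (Or.inr ?_)
          intro x hx
          have hxpos : 0 < x := lt_of_lt_of_le hhalf hx.1
          have : (c'^2)⁻¹ ≤ (x^2)⁻¹ := inv_sq_anti hxpos hx.2
          rw [hr1half, hr1sq] at this
          rw [hpd_eq]; linarith
      have hright : ‖∫ x in d'..b, ee y x‖ ≤ 3/δ := by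
        rcases eq_or_lt_of_le hd'2 with he | hlt
        · rw [he, intervalIntegral.integral_same]; simp; positivity
        · have hr2b : d' = r2 := by
            rcases min_cases b r2 with ⟨h1, h2⟩ | ⟨h1, h2⟩
            · rw [hd'def, h1] at hlt; exact absurd hlt (lt_irrefl _)
            · rw [hd'def, h1]
          apply vdc1 y d' b δ hd'pos hd'2 hδ (Or.inl ?_)
          intro x hx
          have : (x^2)⁻¹ ≤ (d'^2)⁻¹ := inv_sq_anti hd'pos hx.1
          rw [hr2b, hr2sq] at this
          rw [hpd_eq]; linarith
      have hmid : ‖∫ x in c'..d', ee y x‖ ≤ 2*δ*b^3 := by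
        have hbd : ‖∫ x in c'..d', ee y x‖ ≤ 1 * |d' - c'| :=
          intervalIntegral.norm_integral_le_of_norm_le_const
            (fun x _ => le_of_eq (norm_ee y x))
        rw [one_mul, abs_of_nonneg (by linarith)] at hbd
        refine le_trans hbd (gap b c' d' δ hb hc'1 hd'1 hd'2 hδ ?_)
        linarith
      rw [hsplit]
      calc ‖(∫ x in (b/2)..c', ee y x) + (∫ x in c'..d', ee y x) + (∫ x in d'..b, ee y x)‖
          ≤ ‖(∫ x in (b/2)..c', ee y x) + (∫ x in c'..d', ee y x)‖ + ‖∫ x in d'..b, ee y x‖ :=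
            norm_add_le _ _
        _ ≤ ‖∫ x in (b/2)..c', ee y x‖ + ‖∫ x in c'..d', ee y x‖ + ‖∫ x in d'..b, ee y x‖ := by
            gcongr; exact norm_add_le _ _
        _ ≤ 3/δ + 2*δ*b^3 + 3/δ := by linarith
        _ ≤ 8*s := by rw [h3δeq, hδb3]; nlinarith

lemma tail_pos (y b : ℝ) (hb : 0 < b) (hy : 5*(b^2)⁻¹ ≤ 2*π*y) :
    ‖∫ x in (b/2)..b, ee y x‖ ≤ 15/(2*π*y) := by
  have hb2 : (0:ℝ) < (b^2)⁻¹ := by positivity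
  have hhalf : (0:ℝ) < b/2 := by linarith
  have hbsq : ((b/2)^2)⁻¹ = 4*(b^2)⁻¹ := by field_simp; ring
  have hδ : 0 < 2*π*y/5 := by linarith
  have h := vdc1 y (b/2) b (2*π*y/5) hhalf (by linarith) hδ (Or.inl ?_)
  · calc ‖∫ x in (b/2)..b, ee y x‖ ≤ 3/(2*π*y/5) := h
      _ = 15/(2*π*y) := by rw [div_div_eq_mul_div]; ring_nf
  · intro x hx
    have h1 : (x^2)⁻¹ ≤ ((b/2)^2)⁻¹ := inv_sq_anti hhalf hx.1
    rw [hbsq] at h1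
    show 2*π*y/5 ≤ 2*π*y - (x^2)⁻¹
    linarith

lemma tail_neg (y b : ℝ) (hb : 0 < b) (hy : 2*π*y ≤ -(b^2)⁻¹) :
    ‖∫ x in (b/2)..b, ee y x‖ ≤ 3/(-(2*π*y)) := by
  have hb2 : (0:ℝ) < (b^2)⁻¹ := by positivity
  have hhalf : (0:ℝ) < b/2 := by linarith
  have hδ : 0 < -(2*π*y) := by linarith
  exact vdc1 y (b/2) b (-(2*π*y)) hhalf (by linarith) hδ (Or.inr (fun x hx => by
    have hxpos : 0 < x := lt_of_lt_of_le hhalf hx.1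
    have : (0:ℝ) < (x^2)⁻¹ := by positivity
    show 2*π*y - (x^2)⁻¹ ≤ -(-(2*π*y))
    linarith))

set_option maxHeartbeats 1000000 in
lemma lint_bound (p : ℝ) (hp : 2 < p) (b : ℝ) (hb : 0 < b) :
    ∫⁻ y : ℝ, (‖∫ x in (b/2)..b, ee y x‖₊ : ℝ≥0∞) ^ p ≤
      ENNReal.ofReal ((8*Real.sqrt (b^3))^p * (6*((b^2)⁻¹/(2*π))) +
        2*((15/(2*π))^p * ((((b^2)⁻¹/(2*π)))^(1-p)/(p-1)))) := by
  have hp0 : (0:ℝ) ≤ p := by linarith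
  have hπ : (0:ℝ) < π := pi_pos
  set y1 := (b^2)⁻¹/(2*π) with hy1def
  have hy1 : 0 < y1 := by positivity
  set A := 8*Real.sqrt (b^3) with hAdef
  have hA : 0 < A := by positivity
  set M := (15:ℝ)/(2*π) with hMdef
  have hM : 0 < M := by positivity
  set S : Set ℝ := Set.Icc (-y1) (5*y1) with hSdef
  set f2 : ℝ → ℝ≥0∞ := fun y => ENNReal.ofReal (M^p * |y| ^ (-p)) with hf2def
  have hf2meas : Measurable f2 := by
    apply Measurable.ennreal_ofReal
    fun_prop
  set T : Set ℝ := Set.Iic (-y1) ∪ Set.Ici y1 with hTdef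
  have hTmeas : MeasurableSet T := measurableSet_Iic.union measurableSet_Ici
  -- pointwise bound
  have hpt : ∀ y : ℝ, (‖∫ x in (b/2)..b, ee y x‖₊ : ℝ≥0∞) ^ p ≤
      S.indicator (fun _ => ENNReal.ofReal (A^p)) y + T.indicator f2 y := by
    intro y
    by_cases hyS : y ∈ S
    · rw [Set.indicator_of_mem hyS]
      refine le_trans ?_ le_self_add
      rw [← enorm_eq_nnnorm, ← ofReal_norm, ENNReal.ofReal_rpow_of_nonneg (norm_nonneg _) hp0]
      exact ENNReal.ofReal_le_ofReal
        (Real.rpow_le_rpow (norm_nonneg _) (vdc2 y b hb) hp0)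
    · have hbound : ‖∫ x in (b/2)..b, ee y x‖ ≤ M * |y|⁻¹ ∧ y ∈ T := by
        rcases lt_or_ge y (-y1) with hlt | hge
        · have hy0 : y < 0 := by linarith
          have h2 : 2*π*y ≤ -(b^2)⁻¹ := by
            have : 2*π*(-y1) = -(b^2)⁻¹ := by
              rw [hy1def]; field_simp
            nlinarith
          have h3 := tail_neg y b hb h2
          constructor
          · rw [abs_of_neg hy0]
            refine le_trans h3 ?_
            have hny : 0 < -y := by linarith
            rw [hMdef, show -(2*π*y) = 2*π*(-y) by ring,
              show (15:ℝ)/(2*π) * (-y)⁻¹ = 15/(2*π*(-y)) by field_simp]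
            gcongr
            norm_num
          · exact Or.inl (le_of_lt hlt)
        · have hgt : 5*y1 < y := by
            rw [hSdef, Set.mem_Icc] at hyS
            push_neg at hyS
            exact hyS hge
          have hy0 : 0 < y := by nlinarith
          have h2 : 5*(b^2)⁻¹ ≤ 2*π*y := by
            have : 2*π*(5*y1) = 5*(b^2)⁻¹ := by
              rw [hy1def]; field_simp
            nlinarith
          have h3 := tail_pos y b hb h2
          constructor
          · rw [abs_of_pos hy0]
            have he : M * y⁻¹ = 15/(2*π*y) := by rw [hMdef]; field_simp
            rw [he]; exact h3
          · exact Or.inr (by rw [Set.mem_Ici]; nlinarith)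
      rw [Set.indicator_of_notMem hyS, zero_add, Set.indicator_of_mem hbound.2]
      rw [← enorm_eq_nnnorm, ← ofReal_norm, ENNReal.ofReal_rpow_of_nonneg (norm_nonneg _) hp0]
      apply ENNReal.ofReal_le_ofReal
      calc ‖∫ x in (b/2)..b, ee y x‖ ^ p ≤ (M * |y|⁻¹)^p :=
            Real.rpow_le_rpow (norm_nonneg _) hbound.1 hp0
        _ = M^p * |y| ^ (-p) := by
            rw [Real.mul_rpow hM.le (inv_nonneg.mpr (abs_nonneg y)),
              Real.inv_rpow (abs_nonneg y), ← Real.rpow_neg (abs_nonneg y)]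
  -- integrate the bound
  have hind1meas : Measurable (S.indicator (fun _ : ℝ => ENNReal.ofReal (A^p))) :=
    measurable_const.indicator measurableSet_Icc
  have step1 : ∫⁻ y : ℝ, (‖∫ x in (b/2)..b, ee y x‖₊ : ℝ≥0∞) ^ p ≤
      (∫⁻ y, S.indicator (fun _ => ENNReal.ofReal (A^p)) y) + ∫⁻ y, T.indicator f2 y := by
    refine le_trans (lintegral_mono hpt) ?_
    rw [lintegral_add_left hind1meas]
  have hS : (∫⁻ y, S.indicator (fun _ => ENNReal.ofReal (A^p)) y)
      = ENNReal.ofReal (A^p * (6*y1)) := by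
    rw [lintegral_indicator_const measurableSet_Icc, Real.volume_Icc,
      show 5*y1 - -y1 = 6*y1 by ring, ← ENNReal.ofReal_mul (by positivity)]
  -- tail integral over positive side
  have hT2 : (∫⁻ y in Set.Ici y1, f2 y)
      = ENNReal.ofReal (M^p * (y1^(1-p)/(p-1))) := by
    have hcong : ∫⁻ y in Set.Ici y1, f2 y
        = ∫⁻ y in Set.Ici y1, ENNReal.ofReal (M^p * y ^ (-p)) := by
      apply setLIntegral_congr_fun_ae measurableSet_Ici
      filter_upwards with y hy
      rw [hf2def]
      simp only
      rw [abs_of_pos (lt_of_lt_of_le hy1 hy)]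
    rw [hcong, ← MeasureTheory.restrict_Ioi_eq_restrict_Ici]
    have hInt : IntegrableOn (fun y : ℝ => M^p * y ^ (-p)) (Set.Ioi y1) :=
      (integrableOn_Ioi_rpow_of_lt (by linarith : -p < -1) hy1).const_mul _
    have hnn : 0 ≤ᵐ[volume.restrict (Set.Ioi y1)] (fun y : ℝ => M^p * y ^ (-p)) := by
      rw [Filter.EventuallyLE, ae_restrict_iff' measurableSet_Ioi]
      filter_upwards with y hy
      have : 0 < y := lt_trans hy1 hy
      positivity
    rw [← ofReal_integral_eq_lintegral_ofReal hInt hnn]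
    congr 1
    rw [MeasureTheory.integral_const_mul, integral_Ioi_rpow_of_lt (by linarith) hy1]
    rw [show -p + 1 = 1 - p by ring]
    congr 1
    rw [show p - 1 = -(1-p) by ring, div_neg, neg_div]
  -- negative side equals positive side
  have hT1 : (∫⁻ y in Set.Iic (-y1), f2 y) = ∫⁻ y in Set.Ici y1, f2 y := by
    have hcomp : ((Set.Iic (-y1)).indicator f2) ∘ (fun y : ℝ => -y)
        = (Set.Ici y1).indicator f2 := by
      funext y
      simp only [Function.comp_apply, Set.indicator]
      have : (-y ∈ Set.Iic (-y1)) ↔ (y ∈ Set.Ici y1) := by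
        simp [Set.mem_Iic, Set.mem_Ici, neg_le_neg_iff]
      by_cases hy : y ∈ Set.Ici y1
      · rw [if_pos (this.mpr hy), if_pos hy, hf2def]
        simp [abs_neg]
      · rw [if_neg (fun h => hy (this.mp h)), if_neg hy]
    have hmeas1 : Measurable ((Set.Iic (-y1)).indicator f2) :=
      hf2meas.indicator measurableSet_Iic
    rw [← lintegral_indicator measurableSet_Iic, ← lintegral_indicator measurableSet_Ici]
    rw [← hcomp]
    have hmp := (Measure.measurePreserving_neg (volume : Measure ℝ)).map_eq
    conv_lhs => rw [← hmp]
    exact lintegral_map hmeas1 measurable_neg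
  have hV : (0:ℝ) ≤ M^p * (y1^(1-p)/(p-1)) :=
    mul_nonneg (Real.rpow_nonneg hM.le p)
      (div_nonneg (Real.rpow_nonneg hy1.le _) (by linarith))
  have hT : (∫⁻ y, T.indicator f2 y) = ENNReal.ofReal (2*(M^p * (y1^(1-p)/(p-1)))) := by
    rw [lintegral_indicator hTmeas, hTdef,
      lintegral_union measurableSet_Ici (Set.Iic_disjoint_Ici.mpr (by linarith)),
      hT1, hT2, ← ENNReal.ofReal_add hV hV]
    congr 1
    ring
  refine le_trans step1 ?_
  rw [hS, hT, ← ENNReal.ofReal_add (by positivity) (by linarith [hV])]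

lemma pow_form (p : ℝ) (hp : 2 < p) (b : ℝ) (hb : 0 < b) :
    (8*Real.sqrt (b^3))^p * (6*((b^2)⁻¹/(2*π))) +
        2*((15/(2*π))^p * ((((b^2)⁻¹/(2*π)))^(1-p)/(p-1)))
      = (8^p*3/π) * b^((3/2)*p - 2)
        + (2*(15/(2*π))^p*(2*π)^(p-1)/(p-1)) * b^(2*(p-1)) := by
  have hπ : (0:ℝ) < π := pi_pos
  have hsqrt : Real.sqrt (b^3) = b ^ ((3:ℝ)/2) := by
    rw [Real.sqrt_eq_rpow, ← Real.rpow_natCast b 3, ← Real.rpow_mul hb.le]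
    norm_num
  have e1 : (8*Real.sqrt (b^3))^p = 8^p * b^((3/2)*p) := by
    rw [Real.mul_rpow (by norm_num) (Real.sqrt_nonneg _), hsqrt, ← Real.rpow_mul hb.le]
  have e1b : b^((3/2)*p - 2) = b^((3/2)*p) * (b^2)⁻¹ := by
    rw [show (3/2)*p - 2 = (3/2)*p + (-2) by ring, Real.rpow_add hb, Real.rpow_neg hb.le]
    congr 1
    rw [← Real.rpow_natCast b 2]
    norm_num
  have e2a : (((b^2)⁻¹/(2*π)))^(1-p) = (2*π)^(p-1) * b^(2*(p-1)) := by
    rw [Real.div_rpow (by positivity) (by positivity), Real.inv_rpow (by positivity),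
      ← Real.rpow_natCast b 2, ← Real.rpow_mul hb.le, ← Real.rpow_neg hb.le,
      show (1:ℝ) - p = -(p-1) by ring, Real.rpow_neg (by positivity : (0:ℝ) ≤ 2*π),
      division_def, inv_inv, show -(((2:ℕ):ℝ) * -(p-1)) = 2*(p-1) by push_cast; ring]
    ring
  rw [e1, e1b, e2a]
  field_simp
  ring

lemma key_real_ineq (p : ℝ) (hp : 2 < p) (C : ℝ) (hC : 0 < C)
    (hH : ∀ ρ : ℝ, 0 < ρ →
        ENNReal.ofReal (C⁻¹ * (ρ ^ (-(1 / 3 : ℝ)) / 2) ^ ((p - 1) / p)) ≤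
          eLpNorm (fun y : ℝ =>
              ∫ x in (ρ ^ (-(1 / 3 : ℝ)) / 2)..(ρ ^ (-(1 / 3 : ℝ))),
                Complex.exp (Complex.I * ((x⁻¹ + 2 * π * x * y : ℝ) : ℂ)))
            (ENNReal.ofReal p) volume)
    (b : ℝ) (hb : 0 < b) :
    C⁻¹^p * (b/2)^(p-1) ≤
      (8^p*3/π) * b^((3/2)*p - 2)
        + (2*(15/(2*π))^p*(2*π)^(p-1)/(p-1)) * b^(2*(p-1)) := by
  have hp0 : (0:ℝ) < p := by linarith
  set ρ := b ^ (-3 : ℝ) with hρdef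
  have hρ : 0 < ρ := Real.rpow_pos_of_pos hb _
  have hbeq : ρ ^ (-(1 / 3 : ℝ)) = b := by
    rw [hρdef, ← Real.rpow_mul hb.le]
    norm_num
  have H := hH ρ hρ
  rw [hbeq] at H
  -- identify the integrand with ee
  have hee : (fun y : ℝ => ∫ x in (b/2)..b,
      Complex.exp (Complex.I * ((x⁻¹ + 2 * π * x * y : ℝ) : ℂ)))
      = fun y : ℝ => ∫ x in (b/2)..b, ee y x := rfl
  rw [hee] at H
  rw [eLpNorm_eq_lintegral_rpow_enorm_toReal
    (by simp [ENNReal.ofReal_eq_zero]; linarith) ENNReal.ofReal_ne_top,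
    ENNReal.toReal_ofReal hp0.le] at H
  -- raise both sides to the p-th power
  have H2 := ENNReal.rpow_le_rpow H hp0.le
  rw [← ENNReal.rpow_mul, one_div, inv_mul_cancel₀ (ne_of_gt hp0), ENNReal.rpow_one] at H2
  have hXnn : (0:ℝ) ≤ C⁻¹ * (b/2)^((p-1)/p) := by positivity
  rw [ENNReal.ofReal_rpow_of_nonneg hXnn hp0.le] at H2
  have hXp : (C⁻¹ * (b/2)^((p-1)/p)) ^ p = C⁻¹^p * (b/2)^(p-1) := by
    rw [Real.mul_rpow (by positivity) (by positivity), ← Real.rpow_mul (by positivity),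
      div_mul_cancel₀ _ (ne_of_gt hp0)]
  rw [hXp] at H2
  have H3 := le_trans H2 (lint_bound p hp b hb)
  rw [ENNReal.ofReal_le_ofReal_iff ?_] at H3
  · calc C⁻¹^p * (b/2)^(p-1)
        ≤ (8*Real.sqrt (b^3))^p * (6*((b^2)⁻¹/(2*π))) +
          2*((15/(2*π))^p * ((((b^2)⁻¹/(2*π)))^(1-p)/(p-1))) := H3
      _ = _ := pow_form p hp b hb
  · have h1 : (0:ℝ) ≤ 2*((15/(2*π))^p * ((((b^2)⁻¹/(2*π)))^(1-p)/(p-1))) := by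
      have := Real.rpow_nonneg (by positivity : (0:ℝ) ≤ (b^2)⁻¹/(2*π)) (1-p)
      have h2 : (0:ℝ) ≤ (15/(2*π))^p := Real.rpow_nonneg (by positivity) p
      have h3 : (0:ℝ) < p - 1 := by linarith
      positivity
    positivity

theorem part1 (p : ℝ) (hp : 2 < p) :
    ¬ ∃ C : ℝ, 0 < C ∧ ∀ ρ : ℝ, 0 < ρ →
        ENNReal.ofReal (C⁻¹ * (ρ ^ (-(1 / 3 : ℝ)) / 2) ^ ((p - 1) / p)) ≤
          eLpNorm (fun y : ℝ =>
              ∫ x in (ρ ^ (-(1 / 3 : ℝ)) / 2)..(ρ ^ (-(1 / 3 : ℝ))),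
                Complex.exp (Complex.I * ((x⁻¹ + 2 * π * x * y : ℝ) : ℂ)))
            (ENNReal.ofReal p) volume := by
  rintro ⟨C, hC, hH⟩
  have hp0 : (0:ℝ) < p := by linarith
  set K1 : ℝ := 8^p*3/π with hK1def
  set K2 : ℝ := 2*(15/(2*π))^p*(2*π)^(p-1)/(p-1) with hK2def
  have hπ : (0:ℝ) < π := pi_pos
  have hK1 : 0 ≤ K1 := by
    have : (0:ℝ) ≤ (8:ℝ)^p := Real.rpow_nonneg (by norm_num) p
    positivity
  have hK2 : 0 ≤ K2 := by
    have h2 : (0:ℝ) ≤ (15/(2*π))^p := Real.rpow_nonneg (by positivity) p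
    have h3 : (0:ℝ) ≤ (2*π)^(p-1) := Real.rpow_nonneg (by positivity) _
    have h4 : (0:ℝ) < p - 1 := by linarith
    positivity
  set c0 : ℝ := C⁻¹^p / 2^(p-1) with hc0def
  have hc0 : 0 < c0 := by
    have h1 : (0:ℝ) < C⁻¹^p := Real.rpow_pos_of_pos (by positivity) p
    have h2 : (0:ℝ) < (2:ℝ)^(p-1) := Real.rpow_pos_of_pos (by norm_num) _
    positivity
  -- reduce : for all b > 0, c0 ≤ K1 * b^(p/2-1) + K2 * b^(p-1)
  have hψ : ∀ b : ℝ, 0 < b → c0 ≤ K1 * b^(p/2-1) + K2 * b^(p-1) := by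
    intro b hb
    have hkey := key_real_ineq p hp C hC hH b hb
    rw [← hK1def, ← hK2def] at hkey
    have hdiv : (b/2)^(p-1) = b^(p-1) / 2^(p-1) :=
      Real.div_rpow hb.le (by norm_num) (p-1)
    rw [hdiv] at hkey
    have hbp : 0 < b^(1-p) := Real.rpow_pos_of_pos hb _
    have hmul : ∀ u v : ℝ, b ^ u * b ^ v = b ^ (u+v) :=
      fun u v => (Real.rpow_add hb u v).symm
    have h2 := mul_le_mul_of_nonneg_right hkey hbp.le
    have e0 : C⁻¹^p * (b^(p-1) / 2^(p-1)) * b^(1-p) = c0 := by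
      have e0' : C⁻¹^p * (b^(p-1) / 2^(p-1)) * b^(1-p)
          = (C⁻¹^p / 2^(p-1)) * (b^(p-1) * b^(1-p)) := by ring
      rw [e0', hmul, show (p-1)+(1-p) = 0 by ring, Real.rpow_zero, mul_one, hc0def]
    have e1 : (K1*b^(3/2*p-2) + K2*b^(2*(p-1))) * b^(1-p)
        = K1 * b^(p/2-1) + K2 * b^(p-1) := by
      rw [add_mul, mul_assoc, mul_assoc, hmul, hmul,
        show 3/2*p-2+(1-p) = p/2-1 by ring, show 2*(p-1)+(1-p) = p-1 by ring]
    rw [e0, e1] at h2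
    exact h2
  -- but the right-hand side tends to 0 as b → 0⁺
  have hterm : ∀ e : ℝ, 0 < e → Filter.Tendsto (fun b : ℝ => b ^ e)
      (nhdsWithin 0 (Set.Ioi 0)) (nhds 0) := by
    intro e he
    have hc : ContinuousAt (fun x : ℝ => x ^ e) 0 :=
      Real.continuousAt_rpow_const 0 e (Or.inr he.le)
    have h1 := hc.tendsto.mono_left (nhdsWithin_le_nhds (s := Set.Ioi (0:ℝ)))
    rwa [Real.zero_rpow (ne_of_gt he)] at h1
  have htend : Filter.Tendsto (fun b : ℝ => K1 * b^(p/2-1) + K2 * b^(p-1))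
      (nhdsWithin 0 (Set.Ioi 0)) (nhds 0) := by
    have h1 := (hterm (p/2-1) (by linarith)).const_mul K1
    have h2 := (hterm (p-1) (by linarith)).const_mul K2
    have h3 := h1.add h2
    simpa using h3
  have hev : ∀ᶠ b in nhdsWithin (0:ℝ) (Set.Ioi 0),
      K1 * b^(p/2-1) + K2 * b^(p-1) < c0 :=
    htend.eventually (Filter.Tendsto.eventually_lt_const hc0 Filter.tendsto_id)
  obtain ⟨b, hblt, hbmem⟩ := (hev.and eventually_mem_nhdsWithin).exists
  exact absurd (hψ b hbmem) (not_le.mpr hblt)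

theorem part2 (p : ℝ) (hp : 2 < p) :
    ¬ ∃ K : ℝ, 0 < K ∧ ∀ ρ : ℝ, 0 < ρ →
        (ρ ^ (-(1 / 3 : ℝ)) / 2) ^ ((p - 2) / p) * ρ ^ ((1 : ℝ) / 2 - 1 / p) ≤ K := by
  rintro ⟨K, hK, hH⟩
  have hp0 : (0:ℝ) < p := by linarith
  set s : ℝ := (p-2)/p with hsdef
  have hs : 0 < s := div_pos (by linarith) hp0
  set e : ℝ := 1/6 - 1/(3*p) with hedef
  have he : 0 < e := by
    rw [hedef]
    have h1 : 1/(3*p) < 1/6 := by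
      apply div_lt_div_of_pos_left <;> linarith
    linarith
  set X : ℝ := 2^s * (K+1) with hXdef
  have h2s : (0:ℝ) < 2^s := Real.rpow_pos_of_pos (by norm_num) s
  have hX : 0 < X := by positivity
  set ρ : ℝ := X ^ (1/e) with hρdef
  have hρ : 0 < ρ := Real.rpow_pos_of_pos hX _
  have hρe : ρ ^ e = X := by
    rw [hρdef, ← Real.rpow_mul hX.le, one_div, inv_mul_cancel₀ (ne_of_gt he),
      Real.rpow_one]
  have h1 : (ρ ^ (-(1/3:ℝ)) / 2) ^ s = ρ ^ (-(1/3:ℝ)*s) / 2^s := by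
    rw [Real.div_rpow (Real.rpow_nonneg hρ.le _) (by norm_num), ← Real.rpow_mul hρ.le]
  have hexp : -(1/3:ℝ)*s + (1/2 - 1/p) = e := by
    rw [hsdef, hedef]
    field_simp
    ring
  have hH2 := hH ρ hρ
  rw [h1] at hH2
  have h2 : ρ ^ (-(1/3:ℝ)*s) / 2^s * ρ ^ ((1:ℝ)/2 - 1/p) = (2^s)⁻¹ * ρ ^ e := by
    rw [← hexp, Real.rpow_add hρ]
    ring
  rw [h2, hρe, hXdef, ← mul_assoc, inv_mul_cancel₀ (ne_of_gt h2s), one_mul] at hH2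
  linarith

end NoLB
end

/-- Fix `p ∈ (2, ∞)`. For `ρ > 0` let `I = [ρ^{-1/3}/2, ρ^{-1/3}]` (so `|I| = ρ^{-1/3}/2`)
and `g_I(y) = ∫_I e^{i(1/x + 2πxy)} dx`. There is no constant `C > 0` such that
`‖g_I‖_{L^p(ℝ)} ≥ C⁻¹ |I|^{(p-1)/p}` for all `ρ > 0`. Equivalently: there is no `K > 0`
with `|I|^{(p-2)/p} ρ^{1/2 - 1/p} ≤ K` for all `ρ > 0`, since `ρ^{1/6 - 1/(3p)}` is
unbounded as `ρ → ∞` when `p > 2`. -/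
theorem no_lower_bound_for_gI (p : ℝ) (hp : 2 < p) :
    (¬ ∃ C : ℝ, 0 < C ∧ ∀ ρ : ℝ, 0 < ρ →
        ENNReal.ofReal (C⁻¹ * (ρ ^ (-(1 / 3 : ℝ)) / 2) ^ ((p - 1) / p)) ≤
          eLpNorm (fun y : ℝ =>
              ∫ x in (ρ ^ (-(1 / 3 : ℝ)) / 2)..(ρ ^ (-(1 / 3 : ℝ))),
                Complex.exp (Complex.I * ((x⁻¹ + 2 * π * x * y : ℝ) : ℂ)))
            (ENNReal.ofReal p) volume) ∧
    (¬ ∃ K : ℝ, 0 < K ∧ ∀ ρ : ℝ, 0 < ρ →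
        (ρ ^ (-(1 / 3 : ℝ)) / 2) ^ ((p - 2) / p) * ρ ^ ((1 : ℝ) / 2 - 1 / p) ≤ K) := by
  exact ⟨NoLB.part1 p hp, NoLB.part2 p hp⟩
end
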